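/- arXiv:2003.03900 — 7 statements merged into one kernel-verified Lean document; each statement's English description precedes it below -/
import Mathlib

section
/- Consider d arms, N_w ≥ 1 samples per round, and loss vectors L(t) ∈ [0,1]^d for t = 1,…,T. Initialize w(1) = (1/d,…,1/d) ∈ Δ_d. At each round t, sample J₁,…,J_{N_w} i.i.d. from Categorical(w(t)), set γ_i(t) = (1/N_w)(L_i(t)/w_i(t)) ∑_{k=1}^{N_w} 1{J_k = i}, and update w_i(t+1) = w_i(t) exp(−η γ_i(t)) / ∑_{j=1}^d w_j(t) exp(−η γ_j(t)). Let z = (d−1)/N_w + 1 and η = √(2 log(d)/(z T)). Then for any fixed w* ∈ Δ_d, the expected regret satisfies ∑_{t=1}^T E[γ(t)ᵀ(w(t) − w*)] ≤ √(2 z T log(d)). -/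
/-!
EXP3 is Hedge run on the importance-weighted loss estimates `γ(t) ≥ 0`. Along every sample path
the Hedge potential argument (bound the log of each normaliser with `exp (-x) ≤ 1 - x + x²/2`
and telescope the log-weights of a fixed arm) gives regret at most
`log d / η + η/2 · ∑ₜ ∑ᵢ wᵢ(t) γᵢ(t)²`. Given the past, the `Nw` draws of round `t` are
i.i.d. from `w(t)`, so the count of arm `i` has second moment `Nw wᵢ + Nw (Nw - 1) wᵢ²`, and
`E[∑ᵢ wᵢ γᵢ²] ≤ (d - 1)/Nw + 1 = z`. The tower property over the rounds makes the second term
at most `η T z / 2`, and the choice of `η` balances it against `log d / η`.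
-/

open Finset

/-- The weight vectors maintained by EXP3 with `Nw` arm-pulls per round, as a function
of the full sample path `ω` (where `ω t k` is the `k`-th arm sampled in round `t`).
`expWeights d T Nw η L ω t` is the weight vector `w(t+1)` of the algorithm (with
`expWeights … 0` the initial uniform vector `w(1)`); it only depends on the samples of
rounds `< t`. -/
noncomputable def expWeights (d T Nw : ℕ) (η : ℝ) (L : Fin T → Fin d → ℝ)
    (ω : Fin T → Fin Nw → Fin d) : ℕ → Fin d → ℝ
  | 0 => fun _ => 1 / (d : ℝ)
  | t + 1 =>
    if h : t < T then
      fun i =>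
        expWeights d T Nw η L ω t i *
            Real.exp (-η * ((1 / (Nw : ℝ)) * (L ⟨t, h⟩ i / expWeights d T Nw η L ω t i) *
              ∑ k : Fin Nw, if ω ⟨t, h⟩ k = i then (1 : ℝ) else 0)) /
          ∑ j, expWeights d T Nw η L ω t j *
            Real.exp (-η * ((1 / (Nw : ℝ)) * (L ⟨t, h⟩ j / expWeights d T Nw η L ω t j) *
              ∑ k : Fin Nw, if ω ⟨t, h⟩ k = j then (1 : ℝ) else 0))
    else expWeights d T Nw η L ω t

/-- The importance-weighted loss estimate `γ_i(t)` of EXP3 with `Nw` arm-pulls per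
round, computed from the sample path `ω`. -/
noncomputable def exp3Grad (d T Nw : ℕ) (η : ℝ) (L : Fin T → Fin d → ℝ)
    (ω : Fin T → Fin Nw → Fin d) (t : Fin T) (i : Fin d) : ℝ :=
  (1 / (Nw : ℝ)) * (L t i / expWeights d T Nw η L ω (t : ℕ) i) *
    ∑ k : Fin Nw, if ω t k = i then (1 : ℝ) else 0

open Real

theorem sum_sum_update_eq_card_smul {ι A M : Type*} [Fintype ι] [DecidableEq ι] [Fintype A]
    [AddCommMonoid M] (i : ι) (G : (ι → A) → M) :
    ∑ ω, ∑ x, G (Function.update ω i x) = Fintype.card A • ∑ ω, G ω := by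
  let e := Equiv.funSplitAt i A
  have hupdate : ∀ a x (ρ : {j // j ≠ i} → A),
      Function.update (e.symm (a, ρ)) i x = e.symm (x, ρ) := by
    intro a x ρ
    funext j
    by_cases hj : j = i
    · subst hj; simp [e, Equiv.funSplitAt, Equiv.piSplitAt]
    · simp [e, Equiv.funSplitAt, Equiv.piSplitAt, hj]
  rw [← e.symm.sum_comp, ← e.symm.sum_comp, Fintype.sum_prod_type, Fintype.sum_prod_type]
  simp only [hupdate, sum_const, card_univ]
  rw [Finset.sum_comm, smul_sum]

section SequentialSampling

variable {A : Type*} {T : ℕ}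

def DependsOnBefore {β : Type*} (n : ℕ) (f : (Fin T → A) → β) : Prop :=
  ∀ ω ω' : Fin T → A, (∀ s : Fin T, (s : ℕ) < n → ω s = ω' s) → f ω = f ω'

variable (q : Fin T → (Fin T → A) → A → ℝ)

def pathWeight (n : ℕ) (ω : Fin T → A) : ℝ :=
  ∏ s ∈ univ.filter (fun s : Fin T => (s : ℕ) < n), q s ω (ω s)

lemma pathWeight_zero (ω : Fin T → A) : pathWeight q 0 ω = 1 := by
  simp [pathWeight]

lemma pathWeight_succ {n : ℕ} (h : n < T) (ω : Fin T → A) :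
    pathWeight q (n + 1) ω = pathWeight q n ω * q ⟨n, h⟩ ω (ω ⟨n, h⟩) := by
  have : (univ.filter fun s : Fin T => (s : ℕ) < n + 1) =
      insert ⟨n, h⟩ (univ.filter fun s : Fin T => (s : ℕ) < n) := by
    ext s
    simp only [mem_filter, mem_univ, true_and, mem_insert, Fin.ext_iff]
    omega
  rw [pathWeight, this, prod_insert (by simp), mul_comm]
  rfl

lemma pathWeight_self (ω : Fin T → A) : pathWeight q T ω = ∏ s, q s ω (ω s) := by
  rw [pathWeight, filter_true_of_mem fun s _ => s.isLt]

variable {q}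

lemma DependsOnBefore.mono {β : Type*} {n m : ℕ} {f : (Fin T → A) → β}
    (hf : DependsOnBefore n f) (hnm : n ≤ m) : DependsOnBefore m f :=
  fun ω ω' h => hf ω ω' fun s hs => h s (hs.trans_le hnm)

lemma DependsOnBefore.apply_update [DecidableEq A] {β : Type*} {n : ℕ} {f : (Fin T → A) → β}
    (hf : DependsOnBefore n f) {s : Fin T} (hs : n ≤ s) (ω : Fin T → A) (x : A) :
    f (Function.update ω s x) = f ω :=
  hf _ _ fun r hr => Function.update_of_ne (by rintro rfl; omega) _ _

lemma dependsOnBefore_pathWeight (hq : ∀ s : Fin T, DependsOnBefore s (q s)) (n : ℕ) :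
    DependsOnBefore n (pathWeight q n) := by
  intro ω ω' h
  refine prod_congr rfl fun s hs => ?_
  have hsn : (s : ℕ) < n := (mem_filter.mp hs).2
  rw [hq s ω ω' fun r hr => h r (hr.trans hsn), h s hsn]

variable [Fintype A] [DecidableEq A]

lemma card_mul_sum_pathWeight_succ_mul (hq : ∀ s : Fin T, DependsOnBefore s (q s)) {n : ℕ}
    (h : n < T) (g : (Fin T → A) → ℝ) :
    Fintype.card A * ∑ ω, pathWeight q (n + 1) ω * g ω =
      ∑ ω, pathWeight q n ω * ∑ x, q ⟨n, h⟩ ω x * g (Function.update ω ⟨n, h⟩ x) := by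
  have hupdate : ∀ ω x,
      pathWeight q (n + 1) (Function.update ω ⟨n, h⟩ x) * g (Function.update ω ⟨n, h⟩ x) =
        pathWeight q n ω * (q ⟨n, h⟩ ω x * g (Function.update ω ⟨n, h⟩ x)) := by
    intro ω x
    rw [pathWeight_succ q h, (dependsOnBefore_pathWeight hq n).apply_update le_rfl,
      (hq _).apply_update le_rfl, Function.update_self, mul_assoc]
  rw [← nsmul_eq_mul, ← sum_sum_update_eq_card_smul ⟨n, h⟩]
  simp only [hupdate, mul_sum]

-- The rounds `≥ n` are summed freely on the right, so each prefix is counted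
-- `card A ^ (T - n)` times.
lemma card_pow_mul_sum_prod_mul (hq : ∀ s : Fin T, DependsOnBefore s (q s))
    (hq1 : ∀ s ω, ∑ x, q s ω x = 1) {n : ℕ} (hn : n ≤ T) {g : (Fin T → A) → ℝ}
    (hg : DependsOnBefore n g) :
    (Fintype.card A : ℝ) ^ (T - n) * ∑ ω, (∏ s, q s ω (ω s)) * g ω =
      ∑ ω, pathWeight q n ω * g ω := by
  induction hn using Nat.decreasingInduction with
  | self => simp [pathWeight_self]
  | of_succ n h ih =>
    have hg' : ∀ ω x, g (Function.update ω ⟨n, h⟩ x) = g ω := hg.apply_update le_rfl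
    rw [show T - n = T - (n + 1) + 1 by omega, pow_succ', mul_assoc, ih (hg.mono n.le_succ),
      card_mul_sum_pathWeight_succ_mul hq h]
    simp only [hg', ← sum_mul, hq1, one_mul]

lemma sum_prod_eq_one [Nonempty A]
    (hq : ∀ s : Fin T, DependsOnBefore s (q s)) (hq1 : ∀ s ω, ∑ x, q s ω x = 1) :
    ∑ ω : Fin T → A, ∏ s, q s ω (ω s) = 1 := by
  have h := card_pow_mul_sum_prod_mul hq hq1 (Nat.zero_le T) (g := fun _ => 1)
    fun _ _ _ => rfl
  simp only [mul_one, pathWeight_zero, sum_const, card_univ, Fintype.card_fun, Fintype.card_fin,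
    Nat.sub_zero, nsmul_eq_mul, Nat.cast_pow] at h
  exact (mul_eq_left₀ (by positivity)).mp h

lemma sum_prod_mul_eq_sum_prod_mul_sum [Nonempty A]
    (hq : ∀ s : Fin T, DependsOnBefore s (q s)) (hq1 : ∀ s ω, ∑ x, q s ω x = 1) (t : Fin T)
    {Q : (Fin T → A) → ℝ} (hQ : DependsOnBefore (t + 1) Q) :
    ∑ ω, (∏ s, q s ω (ω s)) * Q ω =
      ∑ ω, (∏ s, q s ω (ω s)) * ∑ x, q t ω x * Q (Function.update ω t x) := by
  have hR : DependsOnBefore t fun ω => ∑ x, q t ω x * Q (Function.update ω t x) := by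
    intro ω ω' h
    refine sum_congr rfl fun x _ => ?_
    rw [hq t ω ω' h, hQ _ _ fun r hr => ?_]
    by_cases hrt : r = t
    · simp [hrt]
    · simp only [Function.update_of_ne hrt]
      exact h r (lt_of_le_of_ne (Nat.lt_succ_iff.mp hr) (Fin.val_ne_of_ne hrt))
  have hcard : (0 : ℝ) < Fintype.card A := by exact_mod_cast Fintype.card_pos
  refine mul_left_cancel₀ (pow_ne_zero (T - t) hcard.ne') ?_
  rw [card_pow_mul_sum_prod_mul hq hq1 t.isLt.le hR, show T - t = T - (t + 1) + 1 by omega,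
    pow_succ, mul_comm _ (Fintype.card A : ℝ), mul_assoc,
    card_pow_mul_sum_prod_mul hq hq1 t.isLt hQ, card_mul_sum_pathWeight_succ_mul hq t.isLt]

lemma sum_prod_mul_le [Nonempty A]
    (hq : ∀ s : Fin T, DependsOnBefore s (q s)) (hq0 : ∀ s ω x, 0 ≤ q s ω x)
    (hq1 : ∀ s ω, ∑ x, q s ω x = 1) (t : Fin T) {Q : (Fin T → A) → ℝ}
    (hQ : DependsOnBefore (t + 1) Q) {c : ℝ}
    (hc : ∀ ω, ∑ x, q t ω x * Q (Function.update ω t x) ≤ c) :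
    ∑ ω, (∏ s, q s ω (ω s)) * Q ω ≤ c := by
  rw [sum_prod_mul_eq_sum_prod_mul_sum hq hq1 t hQ]
  calc ∑ ω, (∏ s, q s ω (ω s)) * ∑ x, q t ω x * Q (Function.update ω t x)
      ≤ ∑ ω, (∏ s, q s ω (ω s)) * c :=
        sum_le_sum fun ω _ =>
          mul_le_mul_of_nonneg_left (hc ω) (prod_nonneg fun s _ => hq0 _ _ _)
    _ = c := by rw [← sum_mul, sum_prod_eq_one hq hq1, one_mul]

end SequentialSampling

lemma exp_neg_le_one_sub_add_sq_div_two {x : ℝ} (hx : 0 ≤ x) :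
    exp (-x) ≤ 1 - x + x ^ 2 / 2 := by
  -- `(1 - x + x²/2) (1 + x + x²/2) = 1 + x⁴/4`
  rw [exp_neg, inv_le_iff_one_le_mul₀ (exp_pos x)]
  nlinarith [quadratic_le_exp_of_nonneg hx, sq_nonneg (x - 1), sq_nonneg (x ^ 2)]

section Hedge

variable {ι : Type*} [Fintype ι]

lemma log_sum_mul_exp_neg_le {w g : ι → ℝ} (hw0 : ∀ i, 0 ≤ w i) (hw1 : ∑ i, w i = 1)
    (hg : ∀ i, 0 ≤ g i) {η : ℝ} (hη : 0 ≤ η) :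
    log (∑ i, w i * exp (-η * g i)) ≤ -η * ∑ i, w i * g i + η ^ 2 / 2 * ∑ i, w i * g i ^ 2 := by
  obtain ⟨j, -, hj⟩ := exists_ne_zero_of_sum_ne_zero (hw1.trans_ne one_ne_zero)
  have hZ : 0 < ∑ i, w i * exp (-η * g i) :=
    sum_pos' (fun i _ => by have := hw0 i; positivity)
      ⟨j, mem_univ j, mul_pos ((hw0 j).lt_of_ne' hj) (exp_pos _)⟩
  calc log (∑ i, w i * exp (-η * g i))
      ≤ ∑ i, w i * exp (-η * g i) - 1 := log_le_sub_one_of_pos hZ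
    _ ≤ ∑ i, w i * (1 - η * g i + (η * g i) ^ 2 / 2) - 1 := by
        gcongr with i
        · exact hw0 i
        · rw [neg_mul]
          exact exp_neg_le_one_sub_add_sq_div_two (mul_nonneg hη (hg i))
    _ = -η * ∑ i, w i * g i + η ^ 2 / 2 * ∑ i, w i * g i ^ 2 := by
        have hexpand : ∀ i, w i * (1 - η * g i + (η * g i) ^ 2 / 2) =
            w i + -η * (w i * g i) + η ^ 2 / 2 * (w i * g i ^ 2) := fun i => by ring
        simp only [hexpand, sum_add_distrib, ← mul_sum, hw1]
        ring

variable {T : ℕ} {η : ℝ} {w : ℕ → ι → ℝ} {g : Fin T → ι → ℝ}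

lemma hedge_regret_le_of_arm (hη : 0 < η) (hw_pos : ∀ t i, 0 < w t i)
    (hw_sum : ∀ t, ∑ i, w t i = 1) (hw0 : ∀ i, w 0 i = 1 / Fintype.card ι)
    (hstep : ∀ (t : Fin T) i,
      w (t + 1) i = w t i * exp (-η * g t i) / ∑ j, w t j * exp (-η * g t j))
    (hg : ∀ t i, 0 ≤ g t i) (i : ι) :
    η * ∑ t : Fin T, (∑ j, w t j * g t j - g t i) ≤
      log (Fintype.card ι) + η ^ 2 / 2 * ∑ t : Fin T, ∑ j, w t j * g t j ^ 2 := by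
  set Z : Fin T → ℝ := fun t => ∑ j, w t j * exp (-η * g t j)
  have hlog_step : ∀ t : Fin T, log (w (t + 1) i) - log (w t i) = -η * g t i - log (Z t) := by
    intro t
    have hZ : 0 < Z t := sum_pos (fun j _ => mul_pos (hw_pos t j) (exp_pos _))
      ⟨i, mem_univ i⟩
    rw [hstep, log_div (mul_pos (hw_pos t i) (exp_pos _)).ne' hZ.ne',
      log_mul (hw_pos t i).ne' (exp_pos _).ne', log_exp]
    ring
  have htelescope : ∑ t : Fin T, (-η * g t i - log (Z t)) ≤ log (Fintype.card ι) := by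
    have hwT : log (w T i) ≤ 0 := log_nonpos (hw_pos T i).le
      ((single_le_sum (fun j _ => (hw_pos T j).le) (mem_univ i)).trans (hw_sum T).le)
    rw [← sum_congr rfl fun t _ => hlog_step t,
      Fin.sum_univ_eq_sum_range (fun t => log (w (t + 1) i) - log (w t i)),
      sum_range_sub (fun t => log (w t i)), hw0, one_div, log_inv]
    linarith
  calc η * ∑ t : Fin T, (∑ j, w t j * g t j - g t i)
      = ∑ t, (-η * g t i - log (Z t)) +
          ∑ t : Fin T, (log (Z t) - -η * ∑ j, w t j * g t j) := by
        rw [mul_sum, ← sum_add_distrib]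
        exact sum_congr rfl fun t _ => by ring
    _ ≤ log (Fintype.card ι) + ∑ t : Fin T, η ^ 2 / 2 * ∑ j, w t j * g t j ^ 2 := by
        gcongr with t
        have := log_sum_mul_exp_neg_le (fun j => (hw_pos t j).le) (hw_sum t) (hg t) hη.le
        linarith
    _ = log (Fintype.card ι) + η ^ 2 / 2 * ∑ t : Fin T, ∑ j, w t j * g t j ^ 2 := by
        rw [mul_sum]

theorem hedge_regret_le (hη : 0 < η) (hw_pos : ∀ t i, 0 < w t i)
    (hw_sum : ∀ t, ∑ i, w t i = 1) (hw0 : ∀ i, w 0 i = 1 / Fintype.card ι)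
    (hstep : ∀ (t : Fin T) i,
      w (t + 1) i = w t i * exp (-η * g t i) / ∑ j, w t j * exp (-η * g t j))
    (hg : ∀ t i, 0 ≤ g t i) {u : ι → ℝ} (hu0 : ∀ i, 0 ≤ u i) (hu1 : ∑ i, u i = 1) :
    ∑ t, ∑ i, g t i * (w t i - u i) ≤
      log (Fintype.card ι) / η + η / 2 * ∑ t : Fin T, ∑ i, w t i * g t i ^ 2 := by
  set B := log (Fintype.card ι) + η ^ 2 / 2 * ∑ t : Fin T, ∑ j, w t j * g t j ^ 2
  have harm : ∀ i, ∑ t : Fin T, (∑ j, w t j * g t j - g t i) ≤ B / η := fun i =>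
    (le_div_iff₀' hη).mpr (hedge_regret_le_of_arm hη hw_pos hw_sum hw0 hstep hg i)
  calc ∑ t, ∑ i, g t i * (w t i - u i)
      = ∑ t : Fin T, ∑ i, u i * (∑ j, w t j * g t j - g t i) := by
        refine sum_congr rfl fun t _ => ?_
        simp only [mul_sub, sum_sub_distrib, ← sum_mul, hu1, one_mul]
        simp only [mul_comm (g t _)]
    _ = ∑ i, u i * ∑ t : Fin T, (∑ j, w t j * g t j - g t i) := by
        rw [sum_comm]
        simp only [mul_sum]
    _ ≤ ∑ i, u i * (B / η) := sum_le_sum fun i _ => mul_le_mul_of_nonneg_left (harm i) (hu0 i)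
    _ = log (Fintype.card ι) / η + η / 2 * ∑ t : Fin T, ∑ i, w t i * g t i ^ 2 := by
        rw [← sum_mul, hu1, one_mul]
        field_simp
        ring

end Hedge

section ImportanceSampling

variable {ι : Type*} {N : ℕ}

lemma sum_prod_mul_apply [Fintype ι] {v : ι → ℝ} (hv : ∑ j, v j = 1) (φ : ι → ℝ)
    (k : Fin N) :
    ∑ x : Fin N → ι, (∏ m, v (x m)) * φ (x k) = ∑ j, v j * φ j := by
  have hfactor : ∀ x : Fin N → ι,
      (∏ m, v (x m)) * φ (x k) = ∏ m, v (x m) * if m = k then φ (x m) else 1 := by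
    intro x
    rw [prod_mul_distrib, prod_ite_eq' univ k, if_pos (mem_univ k)]
  have hrow : ∀ m,
      ∑ j, v j * (if m = k then φ j else 1) = if m = k then ∑ j, v j * φ j else 1 := by
    intro m
    split_ifs <;> simp [hv]
  simp only [hfactor]
  rw [← Fintype.prod_sum (fun m j => v j * if m = k then φ j else 1)]
  simp only [hrow, prod_ite_eq' univ k, if_pos (mem_univ k)]

lemma sum_prod_mul_apply_mul_apply [Fintype ι] {v : ι → ℝ} (hv : ∑ j, v j = 1)
    (φ ψ : ι → ℝ) {k l : Fin N} (hkl : k ≠ l) :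
    ∑ x : Fin N → ι, (∏ m, v (x m)) * (φ (x k) * ψ (x l)) =
      (∑ j, v j * φ j) * ∑ j, v j * ψ j := by
  have hfactor : ∀ x : Fin N → ι, (∏ m, v (x m)) * (φ (x k) * ψ (x l)) =
      ∏ m, v (x m) * ((if m = k then φ (x m) else 1) * if m = l then ψ (x m) else 1) := by
    intro x
    rw [prod_mul_distrib, prod_mul_distrib, prod_ite_eq' univ k, prod_ite_eq' univ l,
      if_pos (mem_univ k), if_pos (mem_univ l)]
  have hrow : ∀ m, ∑ j, v j * ((if m = k then φ j else 1) * if m = l then ψ j else 1) =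
      (if m = k then ∑ j, v j * φ j else 1) * if m = l then ∑ j, v j * ψ j else 1 := by
    intro m
    by_cases hk : m = k <;> by_cases hl : m = l
    · exact absurd (hk.symm.trans hl) hkl
    all_goals simp [hk, hl, hv, hkl, hkl.symm]
  simp only [hfactor]
  rw [← Fintype.prod_sum
    (fun m j => v j * ((if m = k then φ j else 1) * if m = l then ψ j else 1))]
  rw [prod_congr rfl fun m _ => hrow m, prod_mul_distrib, prod_ite_eq' univ k,
    prod_ite_eq' univ l, if_pos (mem_univ k), if_pos (mem_univ l)]

lemma sum_prod_mul_count_sq [Fintype ι] [DecidableEq ι] {v : ι → ℝ} (hv : ∑ j, v j = 1)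
    (i : ι) :
    ∑ x : Fin N → ι, (∏ m, v (x m)) * (∑ k, if x k = i then (1 : ℝ) else 0) ^ 2 =
      N * v i + N * (N - 1) * v i ^ 2 := by
  let φ : ι → ℝ := fun j => if j = i then 1 else 0
  have hvφ : ∑ j, v j * φ j = v i := by simp [φ]
  have hpair : ∀ k l : Fin N, ∑ x : Fin N → ι, (∏ m, v (x m)) * (φ (x k) * φ (x l)) =
      v i ^ 2 + if k = l then v i - v i ^ 2 else 0 := by
    intro k l
    split_ifs with hkl
    · subst hkl
      have hidem : ∀ j, φ j * φ j = φ j := fun j => by simp only [φ]; split_ifs <;> norm_num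
      simp only [hidem, sum_prod_mul_apply hv, hvφ]
      ring
    · rw [sum_prod_mul_apply_mul_apply hv φ φ hkl, hvφ]
      ring
  calc ∑ x : Fin N → ι, (∏ m, v (x m)) * (∑ k, if x k = i then (1 : ℝ) else 0) ^ 2
      = ∑ k : Fin N, ∑ l : Fin N, ∑ x : Fin N → ι, (∏ m, v (x m)) * (φ (x k) * φ (x l)) := by
        simp_rw [sq, sum_mul_sum, mul_sum]
        rw [sum_comm]
        refine sum_congr rfl fun k _ => ?_
        rw [sum_comm]
    _ = N * v i + N * (N - 1) * v i ^ 2 := by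
        simp only [hpair, sum_add_distrib, sum_ite_eq, mem_univ, if_true, sum_const, card_univ,
          Fintype.card_fin, nsmul_eq_mul]
        ring

noncomputable def importanceEstimate [DecidableEq ι] (v c : ι → ℝ) (x : Fin N → ι) (i : ι) :
    ℝ :=
  1 / (N : ℝ) * (c i / v i) * ∑ k, if x k = i then (1 : ℝ) else 0

lemma importanceEstimate_nonneg [DecidableEq ι] {v c : ι → ℝ} (hv : ∀ i, 0 ≤ v i)
    (hc : ∀ i, 0 ≤ c i) (x : Fin N → ι) (i : ι) : 0 ≤ importanceEstimate v c x i := by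
  have := hv i
  have := hc i
  unfold importanceEstimate
  positivity

lemma sum_prod_mul_sum_mul_importanceEstimate_sq_le [Fintype ι] [DecidableEq ι] (hN : 1 ≤ N)
    {v : ι → ℝ} (hv0 : ∀ i, 0 < v i) (hv1 : ∑ i, v i = 1) {c : ι → ℝ}
    (hc : ∀ i, c i ∈ Set.Icc (0 : ℝ) 1) :
    ∑ x : Fin N → ι, (∏ m, v (x m)) * ∑ i, v i * importanceEstimate v c x i ^ 2 ≤
      ((Fintype.card ι : ℝ) - 1) / N + 1 := by
  have hN' : (1 : ℝ) ≤ N := by exact_mod_cast hN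
  calc ∑ x : Fin N → ι, (∏ m, v (x m)) * ∑ i, v i * importanceEstimate v c x i ^ 2
      = ∑ i, v i * (1 / (N : ℝ) * (c i / v i)) ^ 2 *
          ∑ x : Fin N → ι, (∏ m, v (x m)) * (∑ k, if x k = i then (1 : ℝ) else 0) ^ 2 := by
        simp only [mul_sum]
        rw [sum_comm]
        exact sum_congr rfl fun i _ => sum_congr rfl fun x _ => by
          rw [importanceEstimate]
          ring
    _ = ∑ i, c i ^ 2 * (1 / N + (N - 1) / N * v i) := by
        refine sum_congr rfl fun i _ => ?_
        rw [sum_prod_mul_count_sq hv1]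
        have := (hv0 i).ne'
        field_simp
    _ ≤ ∑ i, (1 / N + (N - 1) / N * v i) := by
        refine sum_le_sum fun i _ =>
          mul_le_of_le_one_left ?_ (pow_le_one₀ (hc i).1 (hc i).2)
        have := (hv0 i).le
        have : (0 : ℝ) ≤ N - 1 := by linarith
        positivity
    _ = ((Fintype.card ι : ℝ) - 1) / N + 1 := by
        rw [sum_add_distrib, ← mul_sum, hv1, sum_const, card_univ, nsmul_eq_mul]
        field_simp
        ring

end ImportanceSampling

lemma div_sqrt_add_sqrt_div_two_mul {a b : ℝ} (ha : 0 < a) (hb : 0 < b) :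
    a / √(2 * a / b) + √(2 * a / b) / 2 * b = √(2 * a * b) := by
  set s := √(2 * a / b)
  have hs : 0 < s := sqrt_pos.mpr (by positivity)
  have hs2 : s ^ 2 = 2 * a / b := sq_sqrt (by positivity)
  calc a / s + s / 2 * b = s * b := by
        field_simp
        rw [hs2]
        field_simp
        ring
    _ = √(2 * a / b * b ^ 2) := by rw [sqrt_mul (by positivity), sqrt_sq hb.le]
    _ = √(2 * a * b) := by
        congr 1
        field_simp

section Exp3

variable {d T Nw : ℕ} {η : ℝ} {L : Fin T → Fin d → ℝ}

lemma exp3Grad_eq_importanceEstimate (ω : Fin T → Fin Nw → Fin d) (t : Fin T) (i : Fin d) :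
    exp3Grad d T Nw η L ω t i =
      importanceEstimate (expWeights d T Nw η L ω t) (L t) (ω t) i :=
  rfl

lemma expWeights_succ (ω : Fin T → Fin Nw → Fin d) (t : Fin T) (i : Fin d) :
    expWeights d T Nw η L ω (t + 1) i =
      expWeights d T Nw η L ω t i * exp (-η * exp3Grad d T Nw η L ω t i) /
        ∑ j, expWeights d T Nw η L ω t j * exp (-η * exp3Grad d T Nw η L ω t j) := by
  simp only [expWeights, dif_pos t.isLt, exp3Grad]

lemma expWeights_succ_of_le (ω : Fin T → Fin Nw → Fin d) {t : ℕ} (h : T ≤ t) :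
    expWeights d T Nw η L ω (t + 1) = expWeights d T Nw η L ω t := by
  simp only [expWeights, dif_neg h.not_gt]

lemma expWeights_pos (hd : 1 ≤ d) (ω : Fin T → Fin Nw → Fin d) (n : ℕ) (i : Fin d) :
    0 < expWeights d T Nw η L ω n i := by
  induction n generalizing i with
  | zero =>
    simp only [expWeights]
    positivity
  | succ t ih =>
    rcases lt_or_ge t T with h | h
    · rw [expWeights_succ ω ⟨t, h⟩]
      exact div_pos (mul_pos (ih i) (exp_pos _))
        (sum_pos (fun j _ => mul_pos (ih j) (exp_pos _)) ⟨⟨0, hd⟩, mem_univ _⟩)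
    · rw [expWeights_succ_of_le ω h]
      exact ih i

lemma sum_expWeights (hd : 1 ≤ d) (ω : Fin T → Fin Nw → Fin d) (n : ℕ) :
    ∑ i, expWeights d T Nw η L ω n i = 1 := by
  induction n with
  | zero =>
    simp only [expWeights, sum_const, card_univ, Fintype.card_fin, nsmul_eq_mul]
    have : (d : ℝ) ≠ 0 := by positivity
    field_simp
  | succ t ih =>
    rcases lt_or_ge t T with h | h
    · simp only [expWeights_succ ω ⟨t, h⟩, ← sum_div]
      exact div_self (sum_pos (fun j _ => mul_pos (expWeights_pos hd ω t j) (exp_pos _))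
        ⟨⟨0, hd⟩, mem_univ _⟩).ne'
    · rw [expWeights_succ_of_le ω h, ih]

lemma dependsOnBefore_expWeights (n : ℕ) :
    DependsOnBefore n fun ω : Fin T → Fin Nw → Fin d => expWeights d T Nw η L ω n := by
  induction n with
  | zero => exact fun _ _ _ => rfl
  | succ t ih =>
    intro ω ω' h
    have hprev : expWeights d T Nw η L ω t = expWeights d T Nw η L ω' t :=
      ih ω ω' fun s hs => h s (hs.trans t.lt_succ_self)
    dsimp only
    rcases lt_or_ge t T with ht | ht
    · have hround : ω ⟨t, ht⟩ = ω' ⟨t, ht⟩ := h ⟨t, ht⟩ t.lt_succ_self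
      simp only [expWeights, dif_pos ht, hprev, hround]
    · rw [expWeights_succ_of_le ω ht, expWeights_succ_of_le ω' ht, hprev]

noncomputable def exp3SampleProb (d T Nw : ℕ) (η : ℝ) (L : Fin T → Fin d → ℝ) (t : Fin T)
    (ω : Fin T → Fin Nw → Fin d) (x : Fin Nw → Fin d) : ℝ :=
  ∏ k, expWeights d T Nw η L ω t (x k)

lemma dependsOnBefore_exp3SampleProb (t : Fin T) :
    DependsOnBefore t (exp3SampleProb d T Nw η L t) := by
  intro ω ω' h
  exact congrArg (fun (w : Fin d → ℝ) (x : Fin Nw → Fin d) => ∏ k, w (x k))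
    (dependsOnBefore_expWeights t ω ω' h)

lemma exp3SampleProb_nonneg (hd : 1 ≤ d) (t : Fin T) (ω : Fin T → Fin Nw → Fin d)
    (x : Fin Nw → Fin d) : 0 ≤ exp3SampleProb d T Nw η L t ω x :=
  prod_nonneg fun k _ => (expWeights_pos hd ω t (x k)).le

lemma sum_exp3SampleProb (hd : 1 ≤ d) (t : Fin T) (ω : Fin T → Fin Nw → Fin d) :
    ∑ x, exp3SampleProb d T Nw η L t ω x = 1 := by
  simp only [exp3SampleProb]
  rw [← Fintype.prod_sum fun _ j => expWeights d T Nw η L ω t j]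
  simp only [sum_expWeights hd, prod_const_one]

lemma exp3_pathwise_regret_le (hd : 1 ≤ d) (hL : ∀ t i, L t i ∈ Set.Icc (0 : ℝ) 1)
    (hη : 0 < η) {u : Fin d → ℝ} (hu0 : ∀ i, 0 ≤ u i) (hu1 : ∑ i, u i = 1)
    (ω : Fin T → Fin Nw → Fin d) :
    ∑ t : Fin T, ∑ i, exp3Grad d T Nw η L ω t i * (expWeights d T Nw η L ω t i - u i) ≤
      log d / η + η / 2 *
        ∑ t : Fin T, ∑ i, expWeights d T Nw η L ω t i * exp3Grad d T Nw η L ω t i ^ 2 := by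
  have hgrad : ∀ t i, 0 ≤ exp3Grad d T Nw η L ω t i := fun t i =>
    importanceEstimate_nonneg (fun j => (expWeights_pos hd ω t j).le) (fun j => (hL t j).1) _ _
  simpa only [Fintype.card_fin] using
    hedge_regret_le hη (expWeights_pos hd ω) (sum_expWeights hd ω)
      (fun i => by rw [Fintype.card_fin]; rfl) (expWeights_succ ω) hgrad hu0 hu1

lemma exp3_expected_sq_grad_le (hd : 1 ≤ d) (hNw : 1 ≤ Nw)
    (hL : ∀ t i, L t i ∈ Set.Icc (0 : ℝ) 1) (t : Fin T) :
    ∑ ω : Fin T → Fin Nw → Fin d,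
        (∏ s : Fin T, ∏ k : Fin Nw, expWeights d T Nw η L ω s (ω s k)) *
          ∑ i, expWeights d T Nw η L ω t i * exp3Grad d T Nw η L ω t i ^ 2 ≤
      ((d : ℝ) - 1) / Nw + 1 := by
  have : Nonempty (Fin d) := ⟨⟨0, hd⟩⟩
  refine sum_prod_mul_le dependsOnBefore_exp3SampleProb (exp3SampleProb_nonneg hd)
    (sum_exp3SampleProb hd) t ?_ fun ω => ?_
  · intro ω ω' h
    have hw : expWeights d T Nw η L ω t = expWeights d T Nw η L ω' t :=
      dependsOnBefore_expWeights t ω ω' fun s hs => h s (hs.trans t.val.lt_succ_self)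
    simp only [exp3Grad_eq_importanceEstimate, hw, h t t.val.lt_succ_self]
  · have hw : ∀ x,
        expWeights d T Nw η L (Function.update ω t x) t = expWeights d T Nw η L ω t :=
      (dependsOnBefore_expWeights t).apply_update le_rfl ω
    simp only [exp3Grad_eq_importanceEstimate, hw, Function.update_self, exp3SampleProb]
    simpa only [Fintype.card_fin] using sum_prod_mul_sum_mul_importanceEstimate_sq_le hNw
      (expWeights_pos hd ω t) (sum_expWeights hd ω t) (hL t)

lemma exp3_expected_regret_le (hd : 1 ≤ d) (hNw : 1 ≤ Nw)
    (hL : ∀ t i, L t i ∈ Set.Icc (0 : ℝ) 1) (hη : 0 < η) {u : Fin d → ℝ}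
    (hu0 : ∀ i, 0 ≤ u i) (hu1 : ∑ i, u i = 1) :
    ∑ ω : Fin T → Fin Nw → Fin d,
        (∏ t : Fin T, ∏ k : Fin Nw, expWeights d T Nw η L ω t (ω t k)) *
          ∑ t : Fin T, ∑ i, exp3Grad d T Nw η L ω t i * (expWeights d T Nw η L ω t i - u i) ≤
      log d / η + η / 2 * (T * (((d : ℝ) - 1) / Nw + 1)) := by
  have : Nonempty (Fin d) := ⟨⟨0, hd⟩⟩
  set P : (Fin T → Fin Nw → Fin d) → ℝ := fun ω =>
    ∏ t : Fin T, ∏ k : Fin Nw, expWeights d T Nw η L ω t (ω t k)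
  have hP0 : ∀ ω, 0 ≤ P ω := fun ω =>
    prod_nonneg fun t _ => exp3SampleProb_nonneg hd t ω (ω t)
  have hP1 : ∑ ω, P ω = 1 :=
    sum_prod_eq_one dependsOnBefore_exp3SampleProb (sum_exp3SampleProb hd)
  calc ∑ ω, P ω *
        ∑ t : Fin T, ∑ i, exp3Grad d T Nw η L ω t i * (expWeights d T Nw η L ω t i - u i)
      ≤ ∑ ω, P ω * (log d / η + η / 2 *
          ∑ t : Fin T, ∑ i, expWeights d T Nw η L ω t i * exp3Grad d T Nw η L ω t i ^ 2) :=
        sum_le_sum fun ω _ =>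
          mul_le_mul_of_nonneg_left (exp3_pathwise_regret_le hd hL hη hu0 hu1 ω) (hP0 ω)
    _ = log d / η + η / 2 * ∑ t : Fin T, ∑ ω, P ω *
          ∑ i, expWeights d T Nw η L ω t i * exp3Grad d T Nw η L ω t i ^ 2 := by
        simp only [mul_add, sum_add_distrib, ← sum_mul, hP1, one_mul, mul_sum]
        rw [sum_comm]
        congr 1
        exact sum_congr rfl fun t _ => sum_congr rfl fun ω _ =>
          sum_congr rfl fun i _ => by ring
    _ ≤ log d / η + η / 2 * ∑ _t : Fin T, (((d : ℝ) - 1) / Nw + 1) := by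
        gcongr with t
        exact exp3_expected_sq_grad_le hd hNw hL t
    _ = log d / η + η / 2 * (T * (((d : ℝ) - 1) / Nw + 1)) := by
        rw [sum_const, card_univ, Fintype.card_fin, nsmul_eq_mul]

end Exp3

/-- The expectation over the sample path is written as a sum over all paths `ω`, each weighted
by its probability `∏ₜ ∏ₖ w(t)(ω t k)` under the algorithm's sequential sampling. -/
theorem stmt1 (d T Nw : ℕ) (hd : 1 ≤ d) (hT : 1 ≤ T) (hNw : 1 ≤ Nw)
    (L : Fin T → Fin d → ℝ) (hL : ∀ t i, L t i ∈ Set.Icc (0 : ℝ) 1)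
    (z η : ℝ) (hz : z = ((d : ℝ) - 1) / Nw + 1)
    (hη : η = Real.sqrt (2 * Real.log d / (z * T)))
    (wstar : Fin d → ℝ) (hws0 : ∀ i, 0 ≤ wstar i) (hws1 : ∑ i, wstar i = 1) :
    ∑ ω : Fin T → Fin Nw → Fin d,
        (∏ t : Fin T, ∏ k : Fin Nw, expWeights d T Nw η L ω (t : ℕ) (ω t k)) *
          ∑ t : Fin T, ∑ i : Fin d,
            exp3Grad d T Nw η L ω t i * (expWeights d T Nw η L ω (t : ℕ) i - wstar i) ≤
      Real.sqrt (2 * z * T * Real.log d) := by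
  rcases hd.eq_or_lt with rfl | hd
  -- With one arm `η = 0`, so the Hedge bound is unavailable, but `w(t) = wstar` on every path.
  · refine (sum_eq_zero fun ω _ => ?_).trans_le (sqrt_nonneg _)
    have hw : ∀ t, expWeights 1 T Nw η L ω t 0 = 1 := fun t => by
      simpa using sum_expWeights le_rfl ω t
    rw [Fin.sum_univ_one] at hws1
    simp [hw, hws1]
  have hlog : 0 < log d := log_pos (by exact_mod_cast hd)
  have hzT : 0 < z * T := by
    rw [hz]
    have : (1 : ℝ) ≤ d := by exact_mod_cast hd.le
    positivity
  have hη0 : 0 < η := hη ▸ sqrt_pos.mpr (by positivity)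
  calc _ ≤ log d / η + η / 2 * (T * z) :=
        hz ▸ exp3_expected_regret_le hd.le hNw hL hη0 hws0 hws1
    _ = √(2 * z * T * log d) := by
        rw [hη, mul_comm (T : ℝ), div_sqrt_add_sqrt_div_two_mul hlog hzT]
        ring_nf
end

section
/- Let (𝒲, ℱ, P) be a probability space, let φ : ℝ → ℝ ∪ {+∞} be a closed convex function with domain contained in [0,∞) and φ(1) = 0, let φ*(s) = sup_{t ≥ 0} {t s − φ(t)} be its conjugate, let ρ > 0, and let g : 𝒲 → ℝ be a bounded measurable function. Then sup over probability measures Q with Q ≪ P and D_φ(Q‖P) ≤ ρ of ∫ g(w) dQ(w) equals inf over λ ≥ 0 and η ∈ ℝ of { λ ∫ φ*((g(w) − η)/λ) dP(w) + ρλ + η }. -/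
/-!
Weak duality is the Fenchel–Young inequality `s L - φ L ≤ φ*(s)`, taken at `L = dQ/dP` and
integrated against `P`.

For strong duality, let `V` lie strictly above the primal value. The triples
`(∫ L, ∫ φ ∘ L, ∫ L g)` over simple densities `L ≥ 0`, enlarged upwards in the second and
downwards in the third coordinate, form a convex set that misses `(1, ρ, V)`. A separating
hyperplane, made non-vertical by Slater's condition `φ 1 = 0 < ρ`, gives multipliers `λ ≥ 0`
and `η` with `∫ (g - η) L - λ φ ∘ L ≤ V - η - λ ρ` for every simple `L ≥ 0`. For `λ > 0`, the
supremum over `L` can be moved inside the integral: since `φ` is continuous, `φ*` is a supremum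
over a countable dense set, which measurable running maximisers approach monotonically, so
monotone convergence bounds `∫ φ*((g - η) / λ)`. For `λ = 0` the same bound forces `g ≤ η`
almost everywhere.
-/

open MeasureTheory Set
open scoped ENNReal

lemma le_zero_of_forall_add_mul_le {a b c : ℝ} (h : ∀ s, 0 ≤ s → a + s * b ≤ c) : b ≤ 0 := by
  by_contra! hb
  have hac : a ≤ c := by simpa using h 0 le_rfl
  have := h ((c - a + 1) / b) (by positivity)
  rw [div_mul_cancel₀ _ hb.ne'] at this
  linarith

theorem Convex.exists_forall_le_of_notMem {E : Type*} [TopologicalSpace E] [AddCommGroup E]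
    [Module ℝ E] [IsTopologicalAddGroup E] [ContinuousSMul ℝ E] [LocallyConvexSpace ℝ E]
    {A : Set E} (hA : Convex ℝ A) (hAint : (interior A).Nonempty) {p : E} (hp : p ∉ A) :
    ∃ f : StrongDual ℝ E, (∀ a ∈ A, f a ≤ f p) ∧ ∀ a ∈ interior A, f a < f p := by
  obtain ⟨f, hf⟩ := geometric_hahn_banach_open_point hA.interior isOpen_interior
    fun h => hp (interior_subset h)
  refine ⟨f, fun a ha => ?_, hf⟩
  have hclosure : closure (interior A) ⊆ {a | f a ≤ f p} :=
    closure_minimal (fun a ha => (hf a ha).le) (isClosed_le f.continuous continuous_const)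
  rw [hA.closure_interior_eq_closure_of_nonempty_interior hAint] at hclosure
  exact hclosure (subset_closure ha)

lemma exists_seq_mem_subset_closure_range {X : Type*} [TopologicalSpace X]
    [TopologicalSpace.PseudoMetrizableSpace X] [TopologicalSpace.SeparableSpace X] {S : Set X}
    (hS : S.Nonempty) : ∃ u : ℕ → X, (∀ n, u n ∈ S) ∧ S ⊆ closure (range u) := by
  obtain ⟨T, hTS, hTc, hST⟩ :=
    (TopologicalSpace.IsSeparable.of_separableSpace S).exists_countable_dense_subset
  have hT : T.Nonempty := by
    obtain ⟨x, hx⟩ := hS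
    exact closure_nonempty_iff.1 ⟨x, hST hx⟩
  obtain ⟨u, rfl⟩ := hTc.exists_eq_range hT
  exact ⟨u, fun n => hTS (mem_range_self n), hST⟩

lemma ContinuousOn.upperBounds_image_eq {X : Type*} [TopologicalSpace X] {f : X → ℝ}
    {S T : Set X} (hf : ContinuousOn f S)
    (hTS : T ⊆ S) (hST : S ⊆ closure T) : upperBounds (f '' S) = upperBounds (f '' T) := by
  refine (upperBounds_mono_set (image_mono hTS)).antisymm ?_
  rw [← upperBounds_closure]
  refine upperBounds_mono_set ?_
  rintro _ ⟨x, hx, rfl⟩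
  exact ((hf x hx).mono hTS).mem_closure_image (hST hx)

namespace MeasureTheory.SimpleFunc

variable {W β E : Type*} [MeasurableSpace W] [NormedAddCommGroup E]

lemma apply_eq_sum_indicator (L : SimpleFunc W β) (F : W → β → E) (w : W) :
    F w (L w) = ∑ t ∈ L.range, (L ⁻¹' {t}).indicator (F · t) w := by
  rw [Finset.sum_eq_single (L w)]
  · exact (indicator_of_mem rfl _).symm
  · intro t _ ht
    exact indicator_of_notMem (Ne.symm ht) _
  · exact fun h => absurd (L.mem_range_self w) h

lemma measurable_eval [MeasurableSpace E] [BorelSpace E] [SecondCountableTopology E]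
    (L : SimpleFunc W β) {F : W → β → E} (hF : ∀ t, Measurable (F · t)) :
    Measurable fun w => F w (L w) := by
  simp_rw [L.apply_eq_sum_indicator F]
  exact Finset.measurable_sum _ fun t _ => (hF t).indicator (L.measurableSet_fiber t)

lemma integrable_eval {P : Measure W} (L : SimpleFunc W β) {F : W → β → E}
    (hF : ∀ t ∈ L.range, Integrable (F · t) P) : Integrable (fun w => F w (L w)) P := by
  simp_rw [L.apply_eq_sum_indicator F]
  exact integrable_finsetSum _ fun t ht => (hF t ht).indicator (L.measurableSet_fiber t)

end MeasureTheory.SimpleFunc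

theorem integral_iSup_le_of_monotone {W : Type*} [MeasurableSpace W] {P : Measure W}
    [IsFiniteMeasure P] {f : ℕ → W → ℝ}
    (hf : ∀ n, Integrable (f n) P) (hmono : ∀ w, Monotone fun n => f n w) {B : ℝ}
    (hB : ∀ n, ∫ w, f n w ∂P ≤ B) :
    (∀ᵐ w ∂P, BddAbove (range fun n => f n w)) ∧ Integrable (fun w => ⨆ n, f n w) P ∧
      ∫ w, ⨆ n, f n w ∂P ≤ B := by
  have hgap : ∀ n w, 0 ≤ f n w - f 0 w := fun n w => sub_nonneg.2 (hmono w (Nat.zero_le n))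
  set H : W → ℝ≥0∞ := fun w => ⨆ n, ENNReal.ofReal (f n w - f 0 w)
  have hHmeas : AEMeasurable H P :=
    AEMeasurable.iSup fun n => ((hf n).sub (hf 0)).aemeasurable.ennreal_ofReal
  have hH_lintegral : ∫⁻ w, H w ∂P ≤ ENNReal.ofReal (B - ∫ w, f 0 w ∂P) := by
    rw [lintegral_iSup' (f := fun n w => ENNReal.ofReal (f n w - f 0 w))
      (fun n => ((hf n).sub (hf 0)).aemeasurable.ennreal_ofReal)
      (ae_of_all _ fun w m n hmn => ENNReal.ofReal_le_ofReal (by simp [hmono w hmn]))]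
    refine iSup_le fun n => ?_
    have hint : Integrable (fun w => f n w - f 0 w) P := (hf n).sub (hf 0)
    rw [← ofReal_integral_eq_lintegral_ofReal hint (ae_of_all _ (hgap n)),
      integral_sub (hf n) (hf 0)]
    exact ENNReal.ofReal_le_ofReal (by linarith [hB n])
  have hHfin : ∫⁻ w, H w ∂P ≠ ∞ := ne_top_of_le_ne_top ENNReal.ofReal_ne_top hH_lintegral
  have hH_lt_top : ∀ᵐ w ∂P, H w < ∞ := ae_lt_top' hHmeas hHfin
  have hH_int : Integrable (fun w => (H w).toReal) P :=
    integrable_toReal_of_lintegral_ne_top hHmeas hHfin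
  have hH_toReal : ∀ w, (H w).toReal = ⨆ n, (f n w - f 0 w) := fun w => by
    rw [ENNReal.toReal_iSup fun n => ENNReal.ofReal_ne_top]
    simp_rw [ENNReal.toReal_ofReal (hgap _ w)]
  have hae : ∀ᵐ w ∂P, BddAbove (range fun n => f n w) ∧ ⨆ n, f n w = (H w).toReal + f 0 w := by
    filter_upwards [hH_lt_top] with w hw
    have hgap_le : ∀ n, f n w - f 0 w ≤ (H w).toReal := fun n => by
      rw [← ENNReal.toReal_ofReal (hgap n w)]
      exact ENNReal.toReal_mono hw.ne (le_iSup (fun n => ENNReal.ofReal (f n w - f 0 w)) n)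
    have hbdd : BddAbove (range fun n => f n w - f 0 w) := ⟨_, forall_mem_range.2 hgap_le⟩
    refine ⟨⟨(H w).toReal + f 0 w, forall_mem_range.2 fun n => by linarith [hgap_le n]⟩, ?_⟩
    rw [hH_toReal, ← OrderIso.addRight_apply (f 0 w), OrderIso.map_ciSup _ hbdd]
    simp
  have hsup_eq : (fun w => ⨆ n, f n w) =ᵐ[P] fun w => (H w).toReal + f 0 w :=
    hae.mono fun w hw => hw.2
  refine ⟨hae.mono fun w hw => hw.1, (hH_int.add (hf 0)).congr hsup_eq.symm, ?_⟩
  rw [integral_congr_ae hsup_eq, integral_add hH_int (hf 0), integral_toReal hHmeas hH_lt_top]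
  have hH_le : (∫⁻ w, H w ∂P).toReal ≤ B - ∫ w, f 0 w ∂P :=
    ENNReal.toReal_le_of_le_ofReal (by linarith [hB 0]) hH_lintegral
  linarith

section RunningArgmax

variable {W β : Type*} [MeasurableSpace W] (F : W → β → ℝ) (hF : ∀ t, Measurable (F · t))
  (u : ℕ → β)

noncomputable def runningArgmax : ℕ → SimpleFunc W β
  | 0 => SimpleFunc.const W (u 0)
  | k + 1 => SimpleFunc.piecewise {w | F w (runningArgmax k w) < F w (u (k + 1))}
      (measurableSet_lt ((runningArgmax k).measurable_eval hF) (hF _))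
      (SimpleFunc.const W (u (k + 1))) (runningArgmax k)

lemma exists_runningArgmax_eq (k : ℕ) (w : W) : ∃ n, runningArgmax F hF u k w = u n := by
  induction k with
  | zero => exact ⟨0, rfl⟩
  | succ k ih =>
    simp only [runningArgmax, SimpleFunc.piecewise_apply, SimpleFunc.const_apply]
    split_ifs
    exacts [⟨k + 1, rfl⟩, ih]

variable {F hF u}

lemma apply_runningArgmax_succ (k : ℕ) (w : W) :
    F w (runningArgmax F hF u (k + 1) w) =
      max (F w (runningArgmax F hF u k w)) (F w (u (k + 1))) := by
  simp only [runningArgmax, SimpleFunc.piecewise_apply, mem_ofPred_eq, SimpleFunc.const_apply]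
  split_ifs with h
  · exact (max_eq_right h.le).symm
  · exact (max_eq_left (not_lt.1 h)).symm

lemma monotone_apply_runningArgmax (w : W) :
    Monotone fun k => F w (runningArgmax F hF u k w) :=
  monotone_nat_of_le_succ fun k => by rw [apply_runningArgmax_succ (F := F)]; exact le_max_left _ _

lemma apply_le_apply_runningArgmax {n k : ℕ} (hnk : n ≤ k) (w : W) :
    F w (u n) ≤ F w (runningArgmax F hF u k w) := by
  refine le_trans ?_ (monotone_apply_runningArgmax (F := F) w hnk)
  dsimp only
  cases n with
  | zero => rfl
  | succ n => rw [apply_runningArgmax_succ (F := F)]; exact le_max_right _ _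

lemma upperBounds_range_apply_runningArgmax (w : W) :
    upperBounds (range fun k => F w (runningArgmax F hF u k w)) = upperBounds (F w '' range u) := by
  ext b
  simp only [mem_upperBounds, forall_mem_range, forall_mem_image]
  refine ⟨fun h n => (apply_le_apply_runningArgmax le_rfl w).trans (h n), fun h k => ?_⟩
  obtain ⟨n, hn⟩ := exists_runningArgmax_eq F hF u k w
  rw [hn]
  exact h n

end RunningArgmax

theorem integral_sSup_image_le {W X : Type*} [MeasurableSpace W] [TopologicalSpace X]
    [TopologicalSpace.PseudoMetrizableSpace X] [TopologicalSpace.SeparableSpace X]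
    {P : Measure W} [IsFiniteMeasure P] {S : Set X} (hS : S.Nonempty) {F : W → X → ℝ}
    (hcont : ∀ w, ContinuousOn (F w) S) (hmeas : ∀ t, Measurable (F · t))
    (hint : ∀ t ∈ S, Integrable (F · t) P) {B : ℝ}
    (hB : ∀ L : SimpleFunc W X, (∀ w, L w ∈ S) → ∫ w, F w (L w) ∂P ≤ B) :
    (∀ᵐ w ∂P, BddAbove (F w '' S)) ∧ Integrable (fun w => sSup (F w '' S)) P ∧
      ∫ w, sSup (F w '' S) ∂P ≤ B := by
  obtain ⟨u, huS, hSu⟩ := exists_seq_mem_subset_closure_range hS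
  set L := runningArgmax F hmeas u
  have hLS : ∀ k w, L k w ∈ S := fun k w => by
    obtain ⟨n, hn⟩ := exists_runningArgmax_eq F hmeas u k w
    rw [hn]
    exact huS n
  have hLrange : ∀ k, ∀ t ∈ (L k).range, t ∈ S := fun k t ht => by
    obtain ⟨w, rfl⟩ := SimpleFunc.mem_range.1 ht
    exact hLS k w
  obtain ⟨hbdd, hsup_int, hsup_le⟩ := integral_iSup_le_of_monotone
    (fun k => (L k).integrable_eval fun t ht => hint t (hLrange k t ht))
    (fun w => monotone_apply_runningArgmax w) fun k => hB (L k) (hLS k)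
  have hlub : ∀ᵐ w ∂P, IsLUB (F w '' S) (⨆ k, F w (L k w)) := by
    filter_upwards [hbdd] with w hw
    rw [isLUB_congr ((hcont w).upperBounds_image_eq (range_subset_iff.2 huS) hSu),
      ← isLUB_congr (upperBounds_range_apply_runningArgmax w)]
    exact isLUB_ciSup hw
  have hsup_eq : (fun w => sSup (F w '' S)) =ᵐ[P] fun w => ⨆ k, F w (L k w) :=
    hlub.mono fun w hw => hw.csSup_eq (hS.image _)
  exact ⟨hlub.mono fun w hw => hw.bddAbove, hsup_int.congr hsup_eq.symm,
    (integral_congr_ae hsup_eq).trans_le hsup_le⟩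

section PhiDivergence

variable {W : Type*} [MeasurableSpace W]

def primalValues (P : Measure W) (φ : ℝ → ℝ) (ρ : ℝ) (g : W → ℝ) : Set ℝ :=
  {v : ℝ | ∃ Q : Measure W, IsProbabilityMeasure Q ∧ Q ≪ P ∧
    Integrable (fun w => φ (Q.rnDeriv P w).toReal) P ∧
    (∫ w, φ (Q.rnDeriv P w).toReal ∂P) ≤ ρ ∧
    v = ∫ w, g w ∂Q}

/-- The finite values of the dual objective `λ ∫ φ*((g - η) / λ) dP + ρ λ + η`. For `λ > 0` it
is finite exactly when `φ*((g - η) / λ)` is a.e. finite and integrable. At `λ = 0` the perspective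
`λ φ*(s / λ)` is `0` for `s ≤ 0` and `+∞` for `s > 0` (because `dom φ ⊆ [0, ∞)`), so the objective
is `η` when `g ≤ η` a.e. and `+∞` otherwise. -/
def dualValues (P : Measure W) (φ : ℝ → ℝ) (ρ : ℝ) (g : W → ℝ) : Set ℝ :=
  {v : ℝ |
    (∃ lam : ℝ, 0 < lam ∧ ∃ η : ℝ,
      (∀ᵐ w ∂P,
        BddAbove ((fun t => ((g w - η) / lam) * t - φ t) '' Set.Ici 0)) ∧
      Integrable
        (fun w => sSup ((fun t => ((g w - η) / lam) * t - φ t) '' Set.Ici 0)) P ∧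
      v = lam * (∫ w, sSup ((fun t => ((g w - η) / lam) * t - φ t) '' Set.Ici 0) ∂P)
          + ρ * lam + η) ∨
    (∃ η : ℝ, (∀ᵐ w ∂P, g w ≤ η) ∧ v = η)}

def achievableSet (P : Measure W) (φ : ℝ → ℝ) (g : W → ℝ) : Set (ℝ × ℝ × ℝ) :=
  {x | ∃ L : SimpleFunc W ℝ, (∀ w, 0 ≤ L w) ∧ x.1 = ∫ w, L w ∂P ∧
    ∫ w, φ (L w) ∂P ≤ x.2.1 ∧ x.2.2 ≤ ∫ w, L w * g w ∂P}

variable {P : Measure W} {φ : ℝ → ℝ} {ρ : ℝ} {g : W → ℝ}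

lemma integral_mul_mem_primalValues [IsFiniteMeasure P] (L : SimpleFunc W ℝ)
    (hL0 : ∀ w, 0 ≤ L w) (hL1 : ∫ w, L w ∂P = 1) (hLρ : ∫ w, φ (L w) ∂P ≤ ρ) :
    ∫ w, L w * g w ∂P ∈ primalValues P φ ρ g := by
  set Q := P.withDensity fun w => ENNReal.ofReal (L w)
  have hQP : Q ≪ P := withDensity_absolutelyContinuous P _
  have hQ : IsProbabilityMeasure Q := ⟨by
    rw [withDensity_apply _ MeasurableSet.univ, setLIntegral_univ,
      ← ofReal_integral_eq_lintegral_ofReal L.integrable_of_isFiniteMeasure (ae_of_all _ hL0),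
      hL1, ENNReal.ofReal_one]⟩
  have hdens : (fun w => (Q.rnDeriv P w).toReal) =ᵐ[P] L := by
    filter_upwards [Measure.rnDeriv_withDensity P L.measurable.ennreal_ofReal] with w hw
    rw [hw, ENNReal.toReal_ofReal (hL0 w)]
  have hφ : (fun w => φ (Q.rnDeriv P w).toReal) =ᵐ[P] fun w => φ (L w) :=
    hdens.fun_comp φ
  refine ⟨Q, hQ, hQP, ?_, (integral_congr_ae hφ).trans_le hLρ, ?_⟩
  · exact (L.integrable_eval (F := fun _ t => φ t) fun t _ => integrable_const _).congr hφ.symm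
  · rw [← integral_toReal_rnDeriv_mul hQP]
    exact integral_congr_ae (hdens.mul (ae_eq_refl g)).symm

lemma integral_sub_div_mul_sub_eq {L : W → ℝ} (hL : Integrable L P)
    (hLg : Integrable (fun w => L w * g w) P) (hφL : Integrable (fun w => φ (L w)) P)
    (lam η : ℝ) :
    ∫ w, (((g w - η) / lam) * L w - φ (L w)) ∂P =
      (∫ w, L w * g w ∂P - η * ∫ w, L w ∂P) / lam - ∫ w, φ (L w) ∂P := by
  have hfun : (fun w => ((g w - η) / lam) * L w - φ (L w)) =
      fun w => lam⁻¹ * (L w * g w - η * L w) - φ (L w) := by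
    ext w
    ring
  have hsub : Integrable (fun w => L w * g w - η * L w) P := hLg.sub (hL.const_mul η)
  rw [hfun, integral_sub (hsub.const_mul _) hφL, integral_const_mul,
    integral_sub hLg (hL.const_mul η), integral_const_mul, div_eq_inv_mul]

lemma integral_mul_le_dual_objective {L : W → ℝ} (hL0 : ∀ w, 0 ≤ L w) (hL : Integrable L P)
    (hL1 : ∫ w, L w ∂P = 1) (hLg : Integrable (fun w => L w * g w) P)
    (hφL : Integrable (fun w => φ (L w)) P) (hLρ : ∫ w, φ (L w) ∂P ≤ ρ) {lam η : ℝ}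
    (hlam : 0 < lam)
    (hbdd : ∀ᵐ w ∂P, BddAbove ((fun t => ((g w - η) / lam) * t - φ t) '' Ici 0))
    (hconj : Integrable (fun w => sSup ((fun t => ((g w - η) / lam) * t - φ t) '' Ici 0)) P) :
    ∫ w, L w * g w ∂P ≤
      lam * (∫ w, sSup ((fun t => ((g w - η) / lam) * t - φ t) '' Ici 0) ∂P) + ρ * lam + η := by
  have hfenchelYoung : ∀ᵐ w ∂P, ((g w - η) / lam) * L w - φ (L w) ≤
      sSup ((fun t => ((g w - η) / lam) * t - φ t) '' Ici 0) := by
    filter_upwards [hbdd] with w hw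
    exact le_csSup hw (mem_image_of_mem _ (hL0 w))
  have hint : Integrable (fun w => ((g w - η) / lam) * L w - φ (L w)) P := by
    refine (((hLg.sub (hL.const_mul η)).div_const lam).sub hφL).congr (ae_of_all _ fun w => ?_)
    simp only [Pi.sub_apply]
    ring
  have hle := integral_mono_ae hint hconj hfenchelYoung
  rw [integral_sub_div_mul_sub_eq hL hLg hφL, hL1, mul_one, sub_le_iff_le_add,
    div_le_iff₀ hlam] at hle
  linarith [mul_le_mul_of_nonneg_left hLρ hlam.le]

theorem le_of_mem_primalValues_of_mem_dualValues [IsFiniteMeasure P] (hg : Measurable g)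
    {M : ℝ} (hgM : ∀ w, |g w| ≤ M) {v u : ℝ} (hv : v ∈ primalValues P φ ρ g)
    (hu : u ∈ dualValues P φ ρ g) : v ≤ u := by
  obtain ⟨Q, hQ, hQP, hφi, hφρ, rfl⟩ := hv
  have hgQ : Integrable g Q :=
    (integrable_const M).mono' hg.aestronglyMeasurable (ae_of_all _ hgM)
  rcases hu with ⟨lam, hlam, η, hbdd, hconj, rfl⟩ | ⟨η, hgη, huη⟩
  · rw [← integral_toReal_rnDeriv_mul hQP]
    refine integral_mul_le_dual_objective (fun w => ENNReal.toReal_nonneg)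
      Measure.integrable_toReal_rnDeriv ?_ ((integrable_toReal_rnDeriv_mul_iff hQP).2 hgQ) hφi
      hφρ hlam hbdd hconj
    rw [Measure.integral_toReal_rnDeriv hQP, probReal_univ]
  · rw [huη]
    calc ∫ w, g w ∂Q ≤ ∫ _, η ∂Q := integral_mono_ae hgQ (integrable_const η) (hQP.ae_le hgη)
      _ = η := by simp

lemma mem_achievableSet_of_le [IsProbabilityMeasure P] {x : ℝ × ℝ × ℝ} (h1 : 0 ≤ x.1)
    (h2 : φ x.1 ≤ x.2.1) (h3 : x.2.2 ≤ x.1 * ∫ w, g w ∂P) : x ∈ achievableSet P φ g :=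
  ⟨SimpleFunc.const W x.1, fun _ => h1, by simp, by simpa using h2,
    by simpa [integral_const_mul] using h3⟩

lemma mem_interior_achievableSet [IsProbabilityMeasure P] (hφ : ContinuousOn φ (Ioi 0))
    {x : ℝ × ℝ × ℝ} (h1 : 0 < x.1) (h2 : φ x.1 < x.2.1) (h3 : x.2.2 < x.1 * ∫ w, g w ∂P) :
    x ∈ interior (achievableSet P φ g) := by
  have hφx : ContinuousAt (fun y : ℝ × ℝ × ℝ => φ y.1) x :=
    (hφ.continuousAt (Ioi_mem_nhds h1)).comp continuous_fst.continuousAt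
  rw [mem_interior_iff_mem_nhds]
  filter_upwards [continuousAt_const.eventually_lt continuous_fst.continuousAt h1,
    hφx.eventually_lt (continuous_fst.comp continuous_snd).continuousAt h2,
    (continuous_snd.comp continuous_snd).continuousAt.eventually_lt
      (continuous_fst.mul continuous_const).continuousAt h3] with y hy1 hy2 hy3
  exact mem_achievableSet_of_le hy1.le hy2.le hy3.le

lemma convex_achievableSet [IsFiniteMeasure P] (hφ : ConvexOn ℝ (Ici 0) φ)
    (hg : Integrable g P) : Convex ℝ (achievableSet P φ g) := by
  rintro x ⟨L₁, hL₁, hx1, hx2, hx3⟩ y ⟨L₂, hL₂, hy1, hy2, hy3⟩ a b ha hb hab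
  have hL : ∀ L : SimpleFunc W ℝ, Integrable L P := fun L => L.integrable_of_isFiniteMeasure
  have hφL : ∀ L : SimpleFunc W ℝ, Integrable (fun w => φ (L w)) P := fun L =>
    L.integrable_eval (F := fun _ t => φ t) fun t _ => integrable_const _
  have hLg : ∀ L : SimpleFunc W ℝ, Integrable (fun w => L w * g w) P := fun L =>
    L.integrable_eval (F := fun w t => t * g w) fun t _ => hg.const_mul t
  refine ⟨a • L₁ + b • L₂, fun w => ?_, ?_, ?_, ?_⟩
  · simp only [SimpleFunc.coe_add, SimpleFunc.coe_smul, Pi.add_apply, Pi.smul_apply, smul_eq_mul]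
    exact add_nonneg (mul_nonneg ha (hL₁ w)) (mul_nonneg hb (hL₂ w))
  · simp only [SimpleFunc.coe_add, SimpleFunc.coe_smul, Pi.add_apply, Pi.smul_apply,
      Prod.fst_add, Prod.smul_fst, smul_eq_mul, hx1, hy1]
    rw [integral_add ((hL L₁).const_mul a) ((hL L₂).const_mul b), integral_const_mul,
      integral_const_mul]
  · calc ∫ w, φ ((a • L₁ + b • L₂) w) ∂P ≤ ∫ w, (a * φ (L₁ w) + b * φ (L₂ w)) ∂P :=
          integral_mono (hφL _) (((hφL L₁).const_mul a).add ((hφL L₂).const_mul b)) fun w => by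
            simpa using hφ.2 (mem_Ici.2 (hL₁ w)) (mem_Ici.2 (hL₂ w)) ha hb hab
      _ = a * ∫ w, φ (L₁ w) ∂P + b * ∫ w, φ (L₂ w) ∂P := by
          rw [integral_add ((hφL L₁).const_mul a) ((hφL L₂).const_mul b), integral_const_mul,
            integral_const_mul]
      _ ≤ (a • x + b • y).2.1 := by
          simp only [Prod.snd_add, Prod.fst_add, Prod.smul_snd, Prod.smul_fst, smul_eq_mul]
          gcongr
  · calc (a • x + b • y).2.2 ≤ a * ∫ w, L₁ w * g w ∂P + b * ∫ w, L₂ w * g w ∂P := by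
          simp only [Prod.snd_add, Prod.smul_snd, smul_eq_mul]
          gcongr
      _ = ∫ w, (a • L₁ + b • L₂) w * g w ∂P := by
          simp only [SimpleFunc.coe_add, SimpleFunc.coe_smul, Pi.add_apply, Pi.smul_apply,
            smul_eq_mul, add_mul, mul_assoc]
          rw [integral_add ((hLg L₁).const_mul a) ((hLg L₂).const_mul b), integral_const_mul,
            integral_const_mul]

lemma ae_nonpos_of_forall_integral_mul_le {h : W → ℝ} (hh : Integrable h P) {B : ℝ}
    (hB : ∀ L : SimpleFunc W ℝ, (∀ w, 0 ≤ L w) → ∫ w, L w * h w ∂P ≤ B) : h ≤ᵐ[P] 0 := by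
  refine ae_le_of_forall_setIntegral_le hh (integrable_zero _ _ _) fun s hs _ => ?_
  simp only [Pi.zero_apply, integral_zero]
  refine le_zero_of_forall_add_mul_le (a := 0) (c := B) fun t ht => ?_
  have hbound := hB ((SimpleFunc.const W t).restrict s) fun w => by
    rw [SimpleFunc.restrict_apply _ hs]
    exact indicator_nonneg (fun _ _ => ht) w
  simp_rw [SimpleFunc.restrict_apply _ hs, ← indicator_mul_left, SimpleFunc.const_apply,
    integral_indicator hs, integral_const_mul] at hbound
  linarith

theorem exists_lagrangeMultipliers [IsProbabilityMeasure P] (hφ : ConvexOn ℝ (Ici 0) φ)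
    (hφ1 : φ 1 = 0) (hρ : 0 < ρ) (hg : Integrable g P) {V : ℝ}
    (hV : ∀ L : SimpleFunc W ℝ, (∀ w, 0 ≤ L w) → ∫ w, L w ∂P = 1 → ∫ w, φ (L w) ∂P ≤ ρ →
      ∫ w, L w * g w ∂P < V) :
    ∃ lam η : ℝ, 0 ≤ lam ∧ ∀ L : SimpleFunc W ℝ, (∀ w, 0 ≤ L w) →
      ∫ w, L w * g w ∂P - η * ∫ w, L w ∂P - lam * ∫ w, φ (L w) ∂P ≤ V - η - lam * ρ := by
  set Ig := ∫ w, g w ∂P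
  have hp : ((1 : ℝ), ρ, V) ∉ achievableSet P φ g := fun ⟨L, hL0, h1, h2, h3⟩ =>
    (hV L hL0 h1.symm h2).not_ge h3
  have hx₀ : ((1 : ℝ), (1 : ℝ), Ig - 1) ∈ interior (achievableSet P φ g) :=
    mem_interior_achievableSet (by simpa using hφ.continuousOn_interior) one_pos
      (by simp [hφ1]) (by simp [Ig])
  obtain ⟨f, hfA, hfint⟩ := (convex_achievableSet hφ hg).exists_forall_le_of_notMem ⟨_, hx₀⟩ hp
  set α := f ((1 : ℝ), (0 : ℝ), (0 : ℝ))
  set β := f ((0 : ℝ), (1 : ℝ), (0 : ℝ))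
  set γ := f ((0 : ℝ), (0 : ℝ), (1 : ℝ))
  have hf : ∀ x : ℝ × ℝ × ℝ, f x = α * x.1 + β * x.2.1 + γ * x.2.2 := fun x => by
    have hx : x = x.1 • ((1 : ℝ), (0 : ℝ), (0 : ℝ)) + x.2.1 • ((0 : ℝ), (1 : ℝ), (0 : ℝ)) +
        x.2.2 • ((0 : ℝ), (0 : ℝ), (1 : ℝ)) := by
      ext <;> simp
    conv_lhs => rw [hx]
    simp only [map_add, map_smul, smul_eq_mul]
    ring
  have hmem : ∀ a b c : ℝ, 0 ≤ a → φ a ≤ b → c ≤ a * Ig →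
      α * a + β * b + γ * c ≤ α + β * ρ + γ * V := fun a b c ha hb hc => by
    simpa [hf] using hfA (a, b, c) (mem_achievableSet_of_le ha hb hc)
  have hβ : β ≤ 0 := le_zero_of_forall_add_mul_le (a := α + γ * Ig)
      (c := α + β * ρ + γ * V) fun s hs => by
    linarith [hmem 1 s Ig zero_le_one (by simp [hφ1, hs]) (by simp)]
  have hγ : 0 ≤ γ := neg_nonpos.1 <| le_zero_of_forall_add_mul_le (a := α + γ * Ig)
      (c := α + β * ρ + γ * V) fun s hs => by
    linarith [hmem 1 0 (Ig - s) zero_le_one (by simp [hφ1]) (by simp [hs])]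
  -- Slater: `L = 1` is strictly feasible since `φ 1 = 0 < ρ`, which rules out `γ = 0`.
  have hγ_pos : 0 < γ := by
    refine hγ.lt_of_ne fun hγ0 => ?_
    have h1 := hmem 1 0 Ig zero_le_one (by simp [hφ1]) (by simp)
    have h2 := hfint _ hx₀
    rw [hf, hf, ← hγ0] at h2
    rw [← hγ0] at h1
    simp only at h1 h2
    have hβ_neg : β < 0 := by linarith [mul_le_mul_of_nonneg_right hβ hρ.le]
    linarith [mul_neg_of_neg_of_pos hβ_neg hρ]
  refine ⟨-β / γ, -α / γ, div_nonneg (neg_nonneg.2 hβ) hγ_pos.le, fun L hL0 => ?_⟩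
  have hL := hfA (∫ w, L w ∂P, ∫ w, φ (L w) ∂P, ∫ w, L w * g w ∂P) ⟨L, hL0, rfl, le_rfl, le_rfl⟩
  rw [hf, hf] at hL
  rw [← mul_le_mul_iff_of_pos_left hγ_pos]
  field_simp
  simp only at hL
  linarith

theorem exists_mem_dualValues_le [IsProbabilityMeasure P] (hφ : ContinuousOn φ (Ici 0))
    (hg : Measurable g) (hgi : Integrable g P) {lam η V : ℝ} (hlam : 0 ≤ lam)
    (hLag : ∀ L : SimpleFunc W ℝ, (∀ w, 0 ≤ L w) →
      ∫ w, L w * g w ∂P - η * ∫ w, L w ∂P - lam * ∫ w, φ (L w) ∂P ≤ V - η - lam * ρ) :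
    ∃ u ∈ dualValues P φ ρ g, u ≤ V := by
  have hL : ∀ L : SimpleFunc W ℝ, Integrable L P := fun L => L.integrable_of_isFiniteMeasure
  have hLg : ∀ L : SimpleFunc W ℝ, Integrable (fun w => L w * g w) P := fun L =>
    L.integrable_eval (F := fun w t => t * g w) fun t _ => hgi.const_mul t
  rcases hlam.eq_or_lt with rfl | hlam
  · refine ⟨η, Or.inr ⟨η, ?_, rfl⟩, by simpa using hLag 0 fun _ => le_rfl⟩
    have hB : ∀ L : SimpleFunc W ℝ, (∀ w, 0 ≤ L w) →
        ∫ w, L w * (g w - η) ∂P ≤ V - η := fun L hL0 => by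
      simp_rw [mul_sub]
      rw [integral_sub (hLg L) ((hL L).mul_const η), integral_mul_const, mul_comm]
      simpa using hLag L hL0
    filter_upwards [ae_nonpos_of_forall_integral_mul_le (hgi.sub (integrable_const η)) hB]
      with w hw
    exact sub_nonpos.1 hw
  · obtain ⟨hbdd, hconj, hle⟩ := integral_sSup_image_le (S := Ici 0) nonempty_Ici
      (F := fun w t => ((g w - η) / lam) * t - φ t)
      (fun w => (continuousOn_const.mul continuousOn_id).sub hφ)
      (fun t => (((hg.sub_const η).div_const lam).mul_const t).sub_const _)
      (fun t _ => (((hgi.sub (integrable_const η)).div_const lam).mul_const t).sub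
        (integrable_const _))
      (B := (V - η - lam * ρ) / lam) fun L hL0 => by
        rw [integral_sub_div_mul_sub_eq (hL L) (hLg L)
          (L.integrable_eval (F := fun _ t => φ t) fun t _ => integrable_const _),
          sub_le_iff_le_add, div_le_iff₀ hlam, add_mul, div_mul_cancel₀ _ hlam.ne']
        linarith [hLag L hL0]
    refine ⟨_, Or.inl ⟨lam, hlam, η, hbdd, hconj, rfl⟩, ?_⟩
    calc lam * ∫ w, sSup ((fun t => ((g w - η) / lam) * t - φ t) '' Ici 0) ∂P + ρ * lam + η
        ≤ lam * ((V - η - lam * ρ) / lam) + ρ * lam + η := by gcongr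
      _ = V := by field_simp; ring

end PhiDivergence

/-- Duality for φ-divergence-constrained distributionally robust optimization
(Ben-Tal et al.): for a closed convex `φ` with domain contained in `[0,∞)` and
`φ(1) = 0`, a probability measure `P` and a bounded measurable `g`,
`sup {∫ g dQ : Q ≪ P, D_φ(Q‖P) ≤ ρ}
  = inf_{λ ≥ 0, η} { λ ∫ φ*((g - η)/λ) dP + ρλ + η }`.
Here `φ*(s) = sup_{t ≥ 0} (st - φ(t))` appears as `sSup ((fun t => s*t - φ t) '' Ici 0)`;
the `λ > 0` branch is restricted to pairs where the integrand is (a.e.) finite and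
integrable (otherwise the dual objective is `+∞`), and the `λ = 0` branch carries the
perspective-function value, which equals `η` exactly when `g ≤ η` `P`-a.e. (and is
`+∞` otherwise, since `dom φ ⊆ [0,∞)`). -/
theorem stmt2 {W : Type*} [MeasurableSpace W] (P : Measure W) [IsProbabilityMeasure P]
    (φ : ℝ → ℝ) (hconv : ConvexOn ℝ (Set.Ici 0) φ)
    (hclosed : ContinuousOn φ (Set.Ici 0)) (hφ1 : φ 1 = 0)
    (ρ : ℝ) (hρ : 0 < ρ)
    (g : W → ℝ) (hg : Measurable g) (M : ℝ) (hgbdd : ∀ w, |g w| ≤ M) :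
    sSup {v : ℝ | ∃ Q : Measure W, IsProbabilityMeasure Q ∧ Q ≪ P ∧
        Integrable (fun w => φ (Q.rnDeriv P w).toReal) P ∧
        (∫ w, φ (Q.rnDeriv P w).toReal ∂P) ≤ ρ ∧
        v = ∫ w, g w ∂Q} =
      sInf {v : ℝ |
        (∃ lam : ℝ, 0 < lam ∧ ∃ η : ℝ,
          (∀ᵐ w ∂P,
            BddAbove ((fun t => ((g w - η) / lam) * t - φ t) '' Set.Ici 0)) ∧
          Integrable
            (fun w => sSup ((fun t => ((g w - η) / lam) * t - φ t) '' Set.Ici 0)) P ∧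
          v = lam * (∫ w, sSup ((fun t => ((g w - η) / lam) * t - φ t) '' Set.Ici 0) ∂P)
              + ρ * lam + η) ∨
        (∃ η : ℝ, (∀ᵐ w ∂P, g w ≤ η) ∧ v = η)} := by
  change sSup (primalValues P φ ρ g) = sInf (dualValues P φ ρ g)
  have hgi : Integrable g P :=
    (integrable_const M).mono' hg.aestronglyMeasurable (ae_of_all _ hgbdd)
  have hweak : ∀ v ∈ primalValues P φ ρ g, ∀ u ∈ dualValues P φ ρ g, v ≤ u :=
    fun v hv u hu => le_of_mem_primalValues_of_mem_dualValues hg hgbdd hv hu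
  have hP : ∫ w, g w ∂P ∈ primalValues P φ ρ g := by
    simpa using integral_mul_mem_primalValues (g := g) (SimpleFunc.const W 1)
      (fun _ => zero_le_one) (by simp) (by simpa [hφ1] using hρ.le)
  have hM : M ∈ dualValues P φ ρ g :=
    Or.inr ⟨M, ae_of_all _ fun w => (abs_le.1 (hgbdd w)).2, rfl⟩
  refine le_antisymm (csSup_le ⟨_, hP⟩ fun v hv => le_csInf ⟨M, hM⟩ (hweak v hv)) ?_
  refine le_of_forall_pos_le_add fun ε hε => ?_
  have hbdd : BddAbove (primalValues P φ ρ g) := ⟨M, fun v hv => hweak v hv M hM⟩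
  obtain ⟨lam, η, hlam, hLag⟩ := exists_lagrangeMultipliers hconv hφ1 hρ hgi
    (V := sSup (primalValues P φ ρ g) + ε) fun L hL0 hL1 hLρ =>
      (le_csSup hbdd (integral_mul_mem_primalValues L hL0 hL1 hLρ)).trans_lt
        (lt_add_of_pos_right _ hε)
  obtain ⟨u, hu, huV⟩ := exists_mem_dualValues_le hclosed hg hgi hlam hLag
  exact (csInf_le ⟨_, fun u hu => hweak _ hP u hu⟩ hu).trans huV
end

section
/- Let Z₁,…,Z_N be i.i.d. real random variables with common distribution P₀ and |Z_i| ≤ M almost surely. For ρ > 0, with φ(t) = t² − 1, let 𝒫 = {Q : D_φ(Q‖P₀) ≤ ρ} and 𝒫_N = {q ∈ Δ_N : (1/N)∑_{i=1}^N φ(N q_i) ≤ ρ}. Then E[ sup_{q ∈ 𝒫_N} ∑_{i=1}^N q_i Z_i ] ≤ sup_{Q ∈ 𝒫} E_Q[Z]. -/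
/-!
Fix a measurable selection `ω ↦ σ(ω) ∈ 𝒫_N` of near-maximisers and reweight the laws of the `Zᵢ`:
`Q(A) = ∑ᵢ E[σᵢ 1_A(Zᵢ)]`. Then `Q` is a probability measure with `E_Q[Z] = E[∑ᵢ σᵢ Zᵢ]`, so it
suffices to show `Q ∈ 𝒫`. The density of the `i`-th summand with respect to `P₀` is a function
`gᵢ` with `gᵢ(Zᵢ) = E[σᵢ | Zᵢ]`, hence `∫ gᵢ² dP₀ ≤ E[σᵢ²]`, and Cauchy–Schwarz gives
`∫ (dQ/dP₀)² dP₀ ≤ N ∑ᵢ E[σᵢ²] ≤ 1 + ρ`. Measurability of the selection is obtained, at the cost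
of an arbitrary `ε > 0`, by maximising over a countable dense subset of `𝒫_N`.
-/

open MeasureTheory ProbabilityTheory Finset

section SimplexBall

def simplexChiSqBall (N : ℕ) (ρ : ℝ) : Set (Fin N → ℝ) :=
  {q | (∀ i, 0 ≤ q i) ∧ ∑ i, q i = 1 ∧ (1 / (N : ℝ)) * ∑ i, (((N : ℝ) * q i) ^ 2 - 1) ≤ ρ}

variable {N : ℕ} {ρ : ℝ}

theorem simplexChiSqBall_subset_stdSimplex : simplexChiSqBall N ρ ⊆ stdSimplex ℝ (Fin N) :=
  fun _ hq => ⟨hq.1, hq.2.1⟩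

theorem sum_sq_le_of_mem_simplexChiSqBall (hN : 1 ≤ N) {q : Fin N → ℝ}
    (hq : q ∈ simplexChiSqBall N ρ) : ∑ i, q i ^ 2 ≤ (1 + ρ) / N := by
  have hN0 : (0 : ℝ) < N := by exact_mod_cast hN
  have h := hq.2.2
  have hsum : ∑ i, (((N : ℝ) * q i) ^ 2 - 1) = (N : ℝ) ^ 2 * ∑ i, q i ^ 2 - N := by
    simp [Finset.sum_sub_distrib, Finset.mul_sum, mul_pow]
  rw [hsum, one_div, inv_mul_le_iff₀ hN0] at h
  rw [le_div_iff₀ hN0]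
  nlinarith

theorem const_mem_simplexChiSqBall (hN : 1 ≤ N) (hρ : 0 ≤ ρ) :
    (fun _ => 1 / (N : ℝ)) ∈ simplexChiSqBall N ρ := by
  have hN0 : (N : ℝ) ≠ 0 := by positivity
  refine ⟨fun _ => by positivity, by simp [hN0], ?_⟩
  simpa [hN0] using hρ

end SimplexBall

theorem abs_sum_mul_le_of_mem_stdSimplex {ι : Type*} [Fintype ι] {q z : ι → ℝ} {M : ℝ}
    (hq : q ∈ stdSimplex ℝ ι) (hz : ∀ i, |z i| ≤ M) : |∑ i, q i * z i| ≤ M :=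
  calc |∑ i, q i * z i| ≤ ∑ i, q i * M := by
        refine (abs_sum_le_sum_abs _ _).trans (Finset.sum_le_sum fun i _ => ?_)
        rw [abs_mul, abs_of_nonneg (hq.1 i)]
        exact mul_le_mul_of_nonneg_left (hz i) (hq.1 i)
    _ = M := by rw [← Finset.sum_mul, hq.2, one_mul]

theorem abs_ciSup_le {ι : Type*} [Nonempty ι] {f : ι → ℝ} {M : ℝ} (h : ∀ i, |f i| ≤ M) :
    |⨆ i, f i| ≤ M := by
  have hbdd : BddAbove (Set.range f) := ⟨M, by rintro _ ⟨i, rfl⟩; exact le_of_abs_le (h i)⟩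
  obtain ⟨i⟩ := ‹Nonempty ι›
  exact abs_le.mpr ⟨(neg_le_of_abs_le (h i)).trans (le_ciSup hbdd i),
    ciSup_le fun i => le_of_abs_le (h i)⟩

theorem exists_seq_mem_forall_sSup_image_eq {X : Type*} [TopologicalSpace X]
    [SecondCountableTopology X] {K : Set X} (hK : K.Nonempty) :
    ∃ e : ℕ → X, (∀ k, e k ∈ K) ∧
      ∀ f : X → ℝ, Continuous f → sSup (f '' K) = ⨆ k, f (e k) := by
  have : Nonempty K := hK.to_subtype
  obtain ⟨u, hu⟩ := TopologicalSpace.exists_dense_seq K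
  refine ⟨fun k => u k, fun k => (u k).2, fun f hf => ?_⟩
  rw [sSup_image']
  exact (hu.ciSup' (f := f ∘ Subtype.val) (hf.comp continuous_subtype_val)).symm.trans
    (iSup_range' _ u)

theorem exists_measurable_sub_lt_iSup {Ω : Type*} [MeasurableSpace Ω] {g : ℕ → Ω → ℝ}
    (hg : ∀ k, Measurable (g k)) {ε : ℝ} (hε : 0 < ε) :
    ∃ κ : Ω → ℕ, Measurable κ ∧ ∀ ω, (⨆ k, g k ω) - ε < g (κ ω) ω := by
  classical
  have hex : ∀ ω, ∃ k, (⨆ k, g k ω) - ε < g k ω := fun ω =>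
    exists_lt_of_lt_ciSup (sub_lt_self _ hε)
  refine ⟨fun ω => Nat.find (hex ω), measurable_find hex fun k => ?_,
    fun ω => Nat.find_spec (hex ω)⟩
  exact measurableSet_lt ((Measurable.iSup hg).sub_const ε) (hg k)

section WeightedMap

variable {Ω α : Type*} [MeasurableSpace Ω] [MeasurableSpace α] {μ : Measure Ω} {Z : Ω → α}
  {q : Ω → ℝ}

noncomputable def weightedMap (μ : Measure Ω) (Z : Ω → α) (q : Ω → ℝ) : Measure α :=
  (μ.withDensity fun ω => ENNReal.ofReal (q ω)).map Z

theorem weightedMap_le_map (hZ : Measurable Z) (hq : ∀ ω, q ω ≤ 1) :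
    weightedMap μ Z q ≤ μ.map Z := by
  refine Measure.map_mono ?_ hZ
  calc μ.withDensity (fun ω => ENNReal.ofReal (q ω)) ≤ μ.withDensity 1 :=
        withDensity_mono (ae_of_all _ fun ω => ENNReal.ofReal_le_one.mpr (hq ω))
    _ = μ := withDensity_one

theorem weightedMap_apply_univ (hZ : Measurable Z) :
    weightedMap μ Z q Set.univ = ∫⁻ ω, ENNReal.ofReal (q ω) ∂μ := by
  rw [weightedMap, Measure.map_apply hZ MeasurableSet.univ, Set.preimage_univ,
    withDensity_apply _ MeasurableSet.univ, setLIntegral_univ]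

theorem integral_weightedMap (hZ : Measurable Z) (hqm : Measurable q) (hq0 : ∀ ω, 0 ≤ q ω)
    {g : α → ℝ} (hg : Measurable g) :
    ∫ x, g x ∂(weightedMap μ Z q) = ∫ ω, q ω * g (Z ω) ∂μ := by
  rw [weightedMap, integral_map hZ.aemeasurable hg.aestronglyMeasurable,
    integral_withDensity_eq_integral_toReal_smul hqm.ennreal_ofReal
      (ae_of_all _ fun _ => ENNReal.ofReal_lt_top)]
  simp only [ENNReal.toReal_ofReal (hq0 _), smul_eq_mul]

theorem isFiniteMeasure_weightedMap [IsFiniteMeasure μ] (hZ : Measurable Z) (hq : ∀ ω, q ω ≤ 1) :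
    IsFiniteMeasure (weightedMap μ Z q) :=
  isFiniteMeasure_of_le _ (weightedMap_le_map hZ hq)

theorem toReal_rnDeriv_weightedMap_le_one [IsFiniteMeasure μ] (hZ : Measurable Z)
    (hq : ∀ ω, q ω ≤ 1) :
    ∀ᵐ x ∂(μ.map Z), ((weightedMap μ Z q).rnDeriv (μ.map Z) x).toReal ≤ 1 := by
  filter_upwards [Measure.rnDeriv_le_one_of_le (weightedMap_le_map hZ hq)] with x hx
  simpa using ENNReal.toReal_mono ENNReal.one_ne_top hx

theorem integral_rnDeriv_weightedMap_sq_le [IsFiniteMeasure μ] (hZ : Measurable Z)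
    (hqm : Measurable q) (hq0 : ∀ ω, 0 ≤ q ω) (hq1 : ∀ ω, q ω ≤ 1) :
    ∫ x, ((weightedMap μ Z q).rnDeriv (μ.map Z) x).toReal ^ 2 ∂(μ.map Z) ≤ ∫ ω, q ω ^ 2 ∂μ := by
  have := isFiniteMeasure_weightedMap (μ := μ) hZ hq1
  set g := fun x => ((weightedMap μ Z q).rnDeriv (μ.map Z) x).toReal
  have hgm : Measurable g := (Measure.measurable_rnDeriv _ _).ennreal_toReal
  have hgZ1 : ∀ᵐ ω ∂μ, g (Z ω) ≤ 1 :=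
    ae_of_ae_map hZ.aemeasurable (toReal_rnDeriv_weightedMap_le_one hZ hq1)
  have hg_sq : ∫ x, g x ^ 2 ∂(μ.map Z) = ∫ ω, q ω * g (Z ω) ∂μ := by
    simp_rw [sq]
    rw [integral_toReal_rnDeriv_mul (weightedMap_le_map hZ hq1).absolutelyContinuous,
      integral_weightedMap hZ hqm hq0 hgm]
  have hgZ_sq : ∫ ω, g (Z ω) ^ 2 ∂μ = ∫ x, g x ^ 2 ∂(μ.map Z) :=
    (integral_map hZ.aemeasurable (hgm.pow_const 2).aestronglyMeasurable).symm
  have hint_q : Integrable (fun ω => q ω ^ 2) μ :=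
    .of_bound (hqm.pow_const 2).aestronglyMeasurable 1 (ae_of_all _ fun ω => by
      rw [Real.norm_eq_abs, abs_of_nonneg (by positivity)]
      nlinarith [hq0 ω, hq1 ω])
  have hint_g : Integrable (fun ω => g (Z ω) ^ 2) μ :=
    .of_bound ((hgm.comp hZ).pow_const 2).aestronglyMeasurable 1 (by
      filter_upwards [hgZ1] with ω hω
      have : 0 ≤ g (Z ω) := ENNReal.toReal_nonneg
      rw [Real.norm_eq_abs, abs_of_nonneg (by positivity)]
      nlinarith)
  -- `∫ g² = ∫ q · g ∘ Z ≤ (∫ q² + ∫ (g ∘ Z)²) / 2` and `∫ (g ∘ Z)² = ∫ g²`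
  have hAMGM : ∫ ω, q ω * g (Z ω) ∂μ ≤ (∫ ω, q ω ^ 2 ∂μ + ∫ ω, g (Z ω) ^ 2 ∂μ) / 2 := by
    rw [← integral_add hint_q hint_g, ← integral_div]
    exact integral_mono_of_nonneg
      (ae_of_all _ fun ω => mul_nonneg (hq0 ω) ENNReal.toReal_nonneg)
      ((hint_q.add hint_g).div_const 2)
      (ae_of_all _ fun ω => by nlinarith [sq_nonneg (q ω - g (Z ω))])
  linarith

end WeightedMap

theorem MeasureTheory.Measure.rnDeriv_finsetSum {α ι : Type*} [MeasurableSpace α] (s : Finset ι)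
    (ν : ι → Measure α) [∀ i, IsFiniteMeasure (ν i)] (P : Measure α) [SigmaFinite P] :
    (∑ i ∈ s, ν i).rnDeriv P =ᵐ[P] ∑ i ∈ s, (ν i).rnDeriv P := by
  classical
  induction s using Finset.induction_on with
  | empty => simp [Measure.rnDeriv_zero P]
  | insert a s ha ih =>
    rw [Finset.sum_insert ha, Finset.sum_insert ha]
    exact (Measure.rnDeriv_add _ _ P).trans (ih.mono fun x hx => by simp [hx])

theorem MeasureTheory.Measure.toReal_rnDeriv_finsetSum {α ι : Type*} [MeasurableSpace α]
    (s : Finset ι) (ν : ι → Measure α) [∀ i, IsFiniteMeasure (ν i)] (P : Measure α) [SigmaFinite P] :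
    (fun x => ((∑ i ∈ s, ν i).rnDeriv P x).toReal)
      =ᵐ[P] fun x => ∑ i ∈ s, ((ν i).rnDeriv P x).toReal := by
  filter_upwards [Measure.rnDeriv_finsetSum s ν P,
    (Filter.eventually_all_finset s).mpr fun i _ => Measure.rnDeriv_lt_top (ν i) P]
    with x hx hfin
  rw [hx, Finset.sum_apply, ENNReal.toReal_sum fun i hi => (hfin i hi).ne]

section Mixture

variable {Ω α ι : Type*} [MeasurableSpace Ω] [MeasurableSpace α] [Fintype ι] {μ : Measure Ω}
  {Z : ι → Ω → α} {σ : ι → Ω → ℝ}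

theorem isProbabilityMeasure_sum_weightedMap [IsProbabilityMeasure μ] (hZ : ∀ i, Measurable (Z i))
    (hσm : ∀ i, Measurable (σ i)) (hσ : ∀ ω, (fun i => σ i ω) ∈ stdSimplex ℝ ι) :
    IsProbabilityMeasure (∑ i, weightedMap μ (Z i) (σ i)) := by
  constructor
  simp_rw [Measure.finsetSum_apply, weightedMap_apply_univ (hZ _)]
  rw [← lintegral_finsetSum _ fun i _ => (hσm i).ennreal_ofReal]
  simp_rw [← ENNReal.ofReal_sum_of_nonneg fun i _ => (hσ _).1 i, (hσ _).2]
  simp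

variable [IsFiniteMeasure μ] {P : Measure α}

theorem toReal_rnDeriv_sum_weightedMap_ae_eq [SigmaFinite P] (hZ : ∀ i, Measurable (Z i))
    (hσ1 : ∀ i ω, σ i ω ≤ 1) :
    (fun x => ((∑ i, weightedMap μ (Z i) (σ i)).rnDeriv P x).toReal)
      =ᵐ[P] fun x => ∑ i, ((weightedMap μ (Z i) (σ i)).rnDeriv P x).toReal :=
  have := fun i => isFiniteMeasure_weightedMap (μ := μ) (hZ i) (hσ1 i)
  Measure.toReal_rnDeriv_finsetSum univ _ P

theorem ae_forall_toReal_rnDeriv_weightedMap_le_one (hZ : ∀ i, Measurable (Z i))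
    (hlaw : ∀ i, μ.map (Z i) = P) (hσ1 : ∀ i ω, σ i ω ≤ 1) :
    ∀ᵐ x ∂P, ∀ i, ((weightedMap μ (Z i) (σ i)).rnDeriv P x).toReal ≤ 1 :=
  ae_all_iff.mpr fun i => hlaw i ▸ toReal_rnDeriv_weightedMap_le_one (hZ i) (hσ1 i)

theorem integrable_toReal_rnDeriv_sum_weightedMap_sq [IsFiniteMeasure P]
    (hZ : ∀ i, Measurable (Z i)) (hlaw : ∀ i, μ.map (Z i) = P) (hσ1 : ∀ i ω, σ i ω ≤ 1) :
    Integrable (fun x => ((∑ i, weightedMap μ (Z i) (σ i)).rnDeriv P x).toReal ^ 2) P := by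
  refine .of_bound
    ((Measure.measurable_rnDeriv _ _).ennreal_toReal.pow_const 2).aestronglyMeasurable
    ((Fintype.card ι : ℝ) ^ 2) ?_
  filter_upwards [toReal_rnDeriv_sum_weightedMap_ae_eq (μ := μ) (P := P) hZ hσ1,
    ae_forall_toReal_rnDeriv_weightedMap_le_one hZ hlaw hσ1] with x hx hx1
  have hle : ∑ i, ((weightedMap μ (Z i) (σ i)).rnDeriv P x).toReal ≤ Fintype.card ι := by
    simpa using Finset.sum_le_sum fun i (_ : i ∈ univ) => hx1 i
  rw [Real.norm_eq_abs, abs_of_nonneg (by positivity), hx]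
  exact pow_le_pow_left₀ (Finset.sum_nonneg fun _ _ => ENNReal.toReal_nonneg) hle 2

theorem integral_toReal_rnDeriv_sum_weightedMap_sq_le [IsFiniteMeasure P]
    (hZ : ∀ i, Measurable (Z i)) (hlaw : ∀ i, μ.map (Z i) = P) (hσm : ∀ i, Measurable (σ i))
    (hσ : ∀ ω, (fun i => σ i ω) ∈ stdSimplex ℝ ι) :
    ∫ x, ((∑ i, weightedMap μ (Z i) (σ i)).rnDeriv P x).toReal ^ 2 ∂P
      ≤ Fintype.card ι * ∫ ω, ∑ i, σ i ω ^ 2 ∂μ := by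
  have hσ0 : ∀ i ω, 0 ≤ σ i ω := fun i ω => (hσ ω).1 i
  have hσ1 : ∀ i ω, σ i ω ≤ 1 := fun i ω => (mem_Icc_of_mem_stdSimplex (hσ ω) i).2
  set g := fun i x => ((weightedMap μ (Z i) (σ i)).rnDeriv P x).toReal
  have hg1 := ae_forall_toReal_rnDeriv_weightedMap_le_one hZ hlaw hσ1
  have hg_int : ∀ i, Integrable (fun x => g i x ^ 2) P := fun i =>
    .of_bound ((Measure.measurable_rnDeriv _ _).ennreal_toReal.pow_const 2).aestronglyMeasurable 1
      (by
        filter_upwards [hg1] with x hx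
        have : 0 ≤ g i x := ENNReal.toReal_nonneg
        rw [Real.norm_eq_abs, abs_of_nonneg (by positivity)]
        nlinarith [hx i])
  have hσ_int : ∀ i, Integrable (fun ω => σ i ω ^ 2) μ := fun i =>
    .of_bound ((hσm i).pow_const 2).aestronglyMeasurable 1 (ae_of_all _ fun ω => by
      rw [Real.norm_eq_abs, abs_of_nonneg (by positivity)]
      nlinarith [hσ0 i ω, hσ1 i ω])
  calc ∫ x, ((∑ i, weightedMap μ (Z i) (σ i)).rnDeriv P x).toReal ^ 2 ∂P
      ≤ ∫ x, Fintype.card ι * ∑ i, g i x ^ 2 ∂P := by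
        refine integral_mono_ae (integrable_toReal_rnDeriv_sum_weightedMap_sq hZ hlaw hσ1)
          ((integrable_finsetSum _ fun i _ => hg_int i).const_mul _) ?_
        filter_upwards [toReal_rnDeriv_sum_weightedMap_ae_eq (μ := μ) (P := P) hZ hσ1] with x hx
        rw [hx]
        simpa using sq_sum_le_card_mul_sum_sq (s := univ) (f := fun i => g i x)
    _ = Fintype.card ι * ∑ i, ∫ x, g i x ^ 2 ∂P := by
        rw [integral_const_mul, integral_finsetSum _ fun i _ => hg_int i]
    _ ≤ Fintype.card ι * ∑ i, ∫ ω, σ i ω ^ 2 ∂μ := by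
        gcongr with i
        simpa only [g, ← hlaw i] using
          integral_rnDeriv_weightedMap_sq_le (hZ i) (hσm i) (hσ0 i) (hσ1 i)
    _ = Fintype.card ι * ∫ ω, ∑ i, σ i ω ^ 2 ∂μ := by
        rw [integral_finsetSum _ fun i _ => hσ_int i]

end Mixture

def chiSqBall {α : Type*} [MeasurableSpace α] (P : Measure α) (ρ : ℝ) : Set (Measure α) :=
  {Q | IsProbabilityMeasure Q ∧ Q ≪ P ∧
    Integrable (fun x => ((Q.rnDeriv P x).toReal) ^ 2 - 1) P ∧
    ∫ x, (((Q.rnDeriv P x).toReal) ^ 2 - 1) ∂P ≤ ρ}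

theorem sum_weightedMap_mem_chiSqBall {Ω α : Type*} [MeasurableSpace Ω] [MeasurableSpace α]
    {μ : Measure Ω} [IsProbabilityMeasure μ] {P : Measure α} [IsProbabilityMeasure P]
    {N : ℕ} (hN : 1 ≤ N) {ρ : ℝ} {Z : Fin N → Ω → α} {σ : Fin N → Ω → ℝ}
    (hZ : ∀ i, Measurable (Z i)) (hlaw : ∀ i, μ.map (Z i) = P) (hσm : ∀ i, Measurable (σ i))
    (hσ : ∀ ω, (fun i => σ i ω) ∈ simplexChiSqBall N ρ) :
    ∑ i, weightedMap μ (Z i) (σ i) ∈ chiSqBall P ρ := by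
  have hσ' := fun ω => simplexChiSqBall_subset_stdSimplex (hσ ω)
  have hσ1 : ∀ i ω, σ i ω ≤ 1 := fun i ω => (mem_Icc_of_mem_stdSimplex (hσ' ω) i).2
  have hint := integrable_toReal_rnDeriv_sum_weightedMap_sq hZ hlaw hσ1
  refine ⟨isProbabilityMeasure_sum_weightedMap hZ hσm hσ', fun s hs => ?_,
    hint.sub (integrable_const 1), ?_⟩
  · rw [Measure.finsetSum_apply]
    exact Finset.sum_eq_zero fun i _ =>
      (hlaw i ▸ weightedMap_le_map (hZ i) (hσ1 i)).absolutelyContinuous hs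
  have hsq : ∫ ω, ∑ i, σ i ω ^ 2 ∂μ ≤ (1 + ρ) / N := by
    simpa using integral_mono_of_nonneg (μ := μ) (ae_of_all _ fun ω => by positivity)
      (integrable_const ((1 + ρ) / N))
      (ae_of_all _ fun ω => sum_sq_le_of_mem_simplexChiSqBall hN (hσ ω))
  rw [integral_sub hint (integrable_const 1), integral_const, probReal_univ, one_smul,
    sub_le_iff_le_add']
  calc ∫ x, ((∑ i, weightedMap μ (Z i) (σ i)).rnDeriv P x).toReal ^ 2 ∂P
      ≤ N * ∫ ω, ∑ i, σ i ω ^ 2 ∂μ := by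
        simpa using integral_toReal_rnDeriv_sum_weightedMap_sq_le (μ := μ) hZ hlaw hσm hσ'
    _ ≤ N * ((1 + ρ) / N) := by gcongr
    _ = 1 + ρ := by field_simp

theorem integral_sum_weightedMap_id {Ω ι : Type*} [MeasurableSpace Ω] [Fintype ι]
    {μ : Measure Ω} [IsFiniteMeasure μ] {Z : ι → Ω → ℝ} {σ : ι → Ω → ℝ} {M : ℝ}
    (hZ : ∀ i, Measurable (Z i)) (hσm : ∀ i, Measurable (σ i))
    (hσ : ∀ ω, (fun i => σ i ω) ∈ stdSimplex ℝ ι) (hbdd : ∀ i, ∀ᵐ ω ∂μ, |Z i ω| ≤ M) :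
    ∫ x, x ∂(∑ i, weightedMap μ (Z i) (σ i)) = ∫ ω, ∑ i, σ i ω * Z i ω ∂μ := by
  have hσ1 : ∀ i ω, σ i ω ≤ 1 := fun i ω => (mem_Icc_of_mem_stdSimplex (hσ ω) i).2
  have hint : ∀ i ∈ univ, Integrable (fun x => x) (weightedMap μ (Z i) (σ i)) := fun i _ => by
    have := isFiniteMeasure_weightedMap (μ := μ) (hZ i) (hσ1 i)
    have hmap : ∀ᵐ x ∂μ.map (Z i), |x| ≤ M :=
      (ae_map_iff (hZ i).aemeasurable (measurableSet_le measurable_abs measurable_const)).mpr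
        (hbdd i)
    exact .of_bound measurable_id.aestronglyMeasurable M
      ((weightedMap_le_map (hZ i) (hσ1 i)).absolutelyContinuous.ae_le hmap)
  rw [integral_finsetSum_measure hint, integral_finsetSum]
  · exact Finset.sum_congr rfl fun i _ =>
      integral_weightedMap (hZ i) (hσm i) (fun ω => (hσ ω).1 i) measurable_id
  · intro i _
    refine .of_bound ((hσm i).mul (hZ i)).aestronglyMeasurable M ?_
    filter_upwards [hbdd i] with ω hω
    rw [Real.norm_eq_abs, abs_mul, abs_of_nonneg ((hσ ω).1 i)]
    nlinarith [(hσ ω).1 i, hσ1 i ω, abs_nonneg (Z i ω)]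

theorem bddAbove_integral_id_chiSqBall {P : Measure ℝ} {M : ℝ} (hP : ∀ᵐ x ∂P, |x| ≤ M)
    (ρ : ℝ) : BddAbove {v | ∃ Q ∈ chiSqBall P ρ, v = ∫ x, x ∂Q} := by
  refine ⟨M, ?_⟩
  rintro _ ⟨Q, ⟨hQ, hQP, -⟩, rfl⟩
  calc ∫ x, x ∂Q ≤ ‖∫ x, x ∂Q‖ := Real.le_norm_self _
    _ ≤ M := by
      simpa using norm_integral_le_of_norm_le_const (μ := Q) (f := fun x => x) (hQP.ae_le hP)

theorem integral_iSup_le_sSup_integral_id_chiSqBall_add {Ω : Type*} [MeasurableSpace Ω]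
    {μ : Measure Ω} [IsProbabilityMeasure μ] {P : Measure ℝ} [IsProbabilityMeasure P]
    {N : ℕ} (hN : 1 ≤ N) {M ρ : ℝ} {Z : Fin N → Ω → ℝ} (hZ : ∀ i, Measurable (Z i))
    (hlaw : ∀ i, μ.map (Z i) = P) (hbdd : ∀ i, ∀ᵐ ω ∂μ, |Z i ω| ≤ M)
    {e : ℕ → Fin N → ℝ} (he : ∀ k, e k ∈ simplexChiSqBall N ρ) {ε : ℝ} (hε : 0 < ε) :
    ∫ ω, ⨆ k, ∑ i, e k i * Z i ω ∂μ ≤ sSup {v | ∃ Q ∈ chiSqBall P ρ, v = ∫ x, x ∂Q} + ε := by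
  set g : ℕ → Ω → ℝ := fun k ω => ∑ i, e k i * Z i ω
  have hgm : ∀ k, Measurable (g k) := fun k => by fun_prop
  have hg_le : ∀ᵐ ω ∂μ, ∀ k, |g k ω| ≤ M := (ae_all_iff.mpr hbdd).mono fun ω hω k =>
    abs_sum_mul_le_of_mem_stdSimplex (simplexChiSqBall_subset_stdSimplex (he k)) hω
  have hP : ∀ᵐ x ∂P, |x| ≤ M := hlaw ⟨0, hN⟩ ▸
    (ae_map_iff (hZ _).aemeasurable (measurableSet_le measurable_abs measurable_const)).mpr
      (hbdd _)
  obtain ⟨κ, hκm, hκ⟩ := exists_measurable_sub_lt_iSup hgm hε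
  set σ : Fin N → Ω → ℝ := fun i ω => e (κ ω) i
  have hσm : ∀ i, Measurable (σ i) := fun i => (measurable_from_nat (f := fun k => e k i)).comp hκm
  have hσ : ∀ ω, (fun i => σ i ω) ∈ simplexChiSqBall N ρ := fun ω => he (κ ω)
  have hσZ : Integrable (fun ω => ∑ i, σ i ω * Z i ω) μ :=
    .of_bound (by fun_prop) M (hg_le.mono fun ω hω => hω (κ ω))
  have hS_int : Integrable (fun ω => ⨆ k, g k ω) μ :=
    .of_bound (Measurable.iSup hgm).aestronglyMeasurable M (hg_le.mono fun ω => abs_ciSup_le)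
  calc ∫ ω, ⨆ k, g k ω ∂μ ≤ ∫ ω, ∑ i, σ i ω * Z i ω + ε ∂μ :=
        integral_mono hS_int (hσZ.add (integrable_const ε)) fun ω => by linarith [hκ ω]
    _ = ∫ x, x ∂(∑ i, weightedMap μ (Z i) (σ i)) + ε := by
        rw [integral_add hσZ (integrable_const ε), integral_sum_weightedMap_id hZ hσm
          (fun ω => simplexChiSqBall_subset_stdSimplex (hσ ω)) hbdd]
        simp
    _ ≤ _ := by
        gcongr
        exact le_csSup (bddAbove_integral_id_chiSqBall hP ρ)
          ⟨_, sum_weightedMap_mem_chiSqBall hN hZ hlaw hσm hσ, rfl⟩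

theorem stmt4_general {Ω : Type*} [MeasurableSpace Ω] (μ : Measure Ω) [IsProbabilityMeasure μ]
    (N : ℕ) (hN : 1 ≤ N) (M ρ : ℝ) (hρ : 0 < ρ)
    (P₀ : Measure ℝ) [IsProbabilityMeasure P₀]
    (Z : Fin N → Ω → ℝ) (hZm : ∀ i, Measurable (Z i))
    (hlaw : ∀ i, Measure.map (Z i) μ = P₀)
    (hbdd : ∀ i, ∀ᵐ ω ∂μ, |Z i ω| ≤ M)
    (Pset : Set (Measure ℝ))
    (hP : Pset = {Q | IsProbabilityMeasure Q ∧ Q ≪ P₀ ∧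
        Integrable (fun x => ((Q.rnDeriv P₀ x).toReal) ^ 2 - 1) P₀ ∧
        ∫ x, (((Q.rnDeriv P₀ x).toReal) ^ 2 - 1) ∂P₀ ≤ ρ})
    (PN : Set (Fin N → ℝ))
    (hPN : PN = {q | (∀ i, 0 ≤ q i) ∧ ∑ i, q i = 1 ∧
        (1 / (N : ℝ)) * ∑ i, (((N : ℝ) * q i) ^ 2 - 1) ≤ ρ}) :
    ∫ ω, sSup ((fun q => ∑ i, q i * Z i ω) '' PN) ∂μ ≤
      sSup {v : ℝ | ∃ Q ∈ Pset, v = ∫ x, x ∂Q} := by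
  change Pset = chiSqBall P₀ ρ at hP
  change PN = simplexChiSqBall N ρ at hPN
  subst hP hPN
  obtain ⟨e, he, hsup⟩ :=
    exists_seq_mem_forall_sSup_image_eq ⟨_, const_mem_simplexChiSqBall hN hρ.le⟩
  have hS : ∀ ω, sSup ((fun q => ∑ i, q i * Z i ω) '' simplexChiSqBall N ρ)
      = ⨆ k, ∑ i, e k i * Z i ω := fun ω => hsup _ (by fun_prop)
  simp only [hS]
  exact le_of_forall_pos_le_add fun ε hε =>
    integral_iSup_le_sSup_integral_id_chiSqBall_add hN hZm hlaw hbdd he hε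

/-- Upper bound: for i.i.d. bounded `Z₁, …, Z_N ∼ P₀` and the χ²-divergence ball of
radius `ρ`, `E[sup_{q ∈ 𝒫_N} ∑ᵢ qᵢ Zᵢ] ≤ sup_{Q ∈ 𝒫} E_Q[Z]`. -/
theorem stmt4 {Ω : Type*} [MeasurableSpace Ω] (μ : Measure Ω) [IsProbabilityMeasure μ]
    (N : ℕ) (hN : 1 ≤ N) (M ρ : ℝ) (hρ : 0 < ρ)
    (P₀ : Measure ℝ) [IsProbabilityMeasure P₀]
    (Z : Fin N → Ω → ℝ) (hZm : ∀ i, Measurable (Z i))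
    (hlaw : ∀ i, Measure.map (Z i) μ = P₀)
    (hbdd : ∀ i, ∀ᵐ ω ∂μ, |Z i ω| ≤ M)
    (hindep : iIndepFun Z μ)
    (Pset : Set (Measure ℝ))
    (hP : Pset = {Q | IsProbabilityMeasure Q ∧ Q ≪ P₀ ∧
        Integrable (fun x => ((Q.rnDeriv P₀ x).toReal) ^ 2 - 1) P₀ ∧
        ∫ x, (((Q.rnDeriv P₀ x).toReal) ^ 2 - 1) ∂P₀ ≤ ρ})
    (PN : Set (Fin N → ℝ))
    (hPN : PN = {q | (∀ i, 0 ≤ q i) ∧ ∑ i, q i = 1 ∧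
        (1 / (N : ℝ)) * ∑ i, (((N : ℝ) * q i) ^ 2 - 1) ≤ ρ}) :
    ∫ ω, sSup ((fun q => ∑ i, q i * Z i ω) '' PN) ∂μ ≤
      sSup {v : ℝ | ∃ Q ∈ Pset, v = ∫ x, x ∂Q} :=
  stmt4_general μ N hN M ρ hρ P₀ Z hZm hlaw hbdd Pset hP PN hPN
end

section
/- Let Z ≥ 0 be a nonzero random variable with finite 2p-th moment, where 1 ≤ p ≤ 2, and let Z₁,…,Z_n be i.i.d. copies of Z. Then E[ ((1/n) ∑_{i=1}^n Z_i^p)^{1/p} ] ≥ ‖Z‖_p − ((p−1)/p) √(2/n) √(Var(Z^p / E[Z^p])) ‖Z‖₂, where ‖Z‖_r = (E[Z^r])^{1/r}. -/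
open MeasureTheory ProbabilityTheory Finset

/-!
Write `α = 1/p`, `m = E[Zᵖ]` and `T = (1/n) ∑ᵢ Zᵢᵖ`, so that `E[T] = m`. The concave power
`t ↦ t ^ α` lies above its tangent at `m` minus the correction
`(1 - α) |t - m| max(m^α, t^α) / m`. At `t = T` the tangent term integrates to `m^α`, and
Cauchy–Schwarz bounds the expected correction by `√Var T · √E[max(m^α, T^α)²]`. Independence gives
`Var T = Var(Zᵖ) / n`, while `max(m^α, T^α)² ≤ m^(2/p) + T^(2/p)`, and since `2/p ≥ 1`, Jensen's
inequality bounds both `m^(2/p)` and `E[T^(2/p)]` by `E[Z²]`.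
-/

/-- For `x ≤ 1` the left side is `x ≤ x ^ α`; for `x ≥ 1` the bound follows from Bernoulli's
inequality `x ^ (1 - α) ≤ 1 + (1 - α) * (x - 1)`. -/
lemma one_add_mul_sub_abs_mul_max_le_rpow {α x : ℝ} (hα0 : 0 < α) (hα1 : α ≤ 1) (hx : 0 ≤ x) :
    1 + α * (x - 1) - (1 - α) * (|x - 1| * max 1 (x ^ α)) ≤ x ^ α := by
  rcases le_total x 1 with hx1 | hx1
  · have hx_le : x ≤ x ^ α := by
      simpa using Real.rpow_le_rpow_of_exponent_ge' hx hx1 hα0.le hα1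
    rw [max_eq_left (Real.rpow_le_one hx hx1 hα0.le), abs_of_nonpos (by linarith)]
    nlinarith
  · have bernoulli : x ^ (1 - α) ≤ 1 + (1 - α) * (x - 1) := by
      simpa using rpow_one_add_le_one_add_mul_self (s := x - 1) (by linarith)
        (p := 1 - α) (by linarith) (by linarith)
    have hsplit : x = x ^ α * x ^ (1 - α) := by
      rw [← Real.rpow_add (by linarith)]; norm_num
    have hxα : 1 ≤ x ^ α := Real.one_le_rpow hx1 hα0.le
    rw [max_eq_right hxα, abs_of_nonneg (by linarith)]
    nlinarith [mul_le_mul_of_nonneg_left bernoulli (by linarith : 0 ≤ x ^ α),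
      mul_le_mul_of_nonneg_right hα1 (sub_nonneg.2 hx1)]

lemma rpow_add_mul_sub_abs_mul_max_le_rpow {α m t : ℝ} (hα0 : 0 < α) (hα1 : α ≤ 1)
    (hm : 0 < m) (ht : 0 ≤ t) :
    m ^ α + α * m ^ α * (t / m - 1) - (1 - α) * (|t - m| * max (m ^ α) (t ^ α)) / m ≤ t ^ α := by
  have hmα : 0 < m ^ α := Real.rpow_pos_of_pos hm α
  have h := mul_le_mul_of_nonneg_left
    (one_add_mul_sub_abs_mul_max_le_rpow hα0 hα1 (div_nonneg ht hm.le)) hmα.le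
  have habs : |t / m - 1| = |t - m| / m := by
    rw [← abs_of_pos hm, ← abs_div, abs_of_pos hm, sub_div, div_self hm.ne']
  have hmax : max 1 ((t / m) ^ α) = max (m ^ α) (t ^ α) / m ^ α := by
    rw [Real.div_rpow ht hm.le, ← max_div_div_right hmα.le, div_self hmα.ne']
  rw [habs, hmax, ← Real.mul_rpow hm.le (div_nonneg ht hm.le), mul_div_cancel₀ _ hm.ne'] at h
  refine le_of_eq_of_le ?_ h
  field_simp

section Moments

variable {Ω : Type*} [MeasurableSpace Ω] {μ : Measure Ω}

lemma integrable_rpow_of_le [IsFiniteMeasure μ] {X : Ω → ℝ} {c q : ℝ}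
    (hX : AEStronglyMeasurable X μ) (hX0 : 0 ≤ᵐ[μ] X) (hq : Integrable (fun ω => X ω ^ q) μ)
    (hc : 0 ≤ c) (hcq : c ≤ q) : Integrable (fun ω => X ω ^ c) μ := by
  refine ((integrable_const 1).add hq).mono'
    ((Real.continuous_rpow_const hc).comp_aestronglyMeasurable hX) ?_
  filter_upwards [hX0] with ω hω
  rw [Real.norm_of_nonneg (Real.rpow_nonneg hω c), Pi.add_apply]
  have hωq := Real.rpow_nonneg hω q
  rcases le_total (X ω) 1 with h | h
  · linarith [Real.rpow_le_one hω h hc]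
  · linarith [Real.rpow_le_rpow_of_exponent_le h hcq]

lemma integral_rpow_pos {X : Ω → ℝ} {p : ℝ} (hp : p ≠ 0) (hX0 : ∀ ω, 0 ≤ X ω)
    (hX : ¬ X =ᵐ[μ] 0) (hXp : Integrable (fun ω => X ω ^ p) μ) : 0 < ∫ ω, X ω ^ p ∂μ := by
  refine (integral_nonneg fun ω => Real.rpow_nonneg (hX0 ω) p).lt_of_ne' fun h => hX ?_
  filter_upwards [(integral_eq_zero_iff_of_nonneg (fun ω => Real.rpow_nonneg (hX0 ω) p) hXp).1 h]
    with ω hω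
  exact (Real.rpow_eq_zero (hX0 ω) hp).1 hω

lemma rpow_integral_rpow_le_integral_rpow [IsProbabilityMeasure μ] {X : Ω → ℝ} {p q : ℝ}
    (hp : 0 < p) (hpq : p ≤ q) (hX : AEStronglyMeasurable X μ) (hX0 : 0 ≤ᵐ[μ] X)
    (hXq : Integrable (fun ω => X ω ^ q) μ) :
    (∫ ω, X ω ^ p ∂μ) ^ (q / p) ≤ ∫ ω, X ω ^ q ∂μ := by
  have hpow : ∀ᵐ ω ∂μ, (X ω ^ p) ^ (q / p) = X ω ^ q := by
    filter_upwards [hX0] with ω hω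
    rw [← Real.rpow_mul hω, mul_div_cancel₀ _ hp.ne']
  rw [← integral_congr_ae hpow]
  exact (convexOn_rpow ((one_le_div hp).2 hpq)).map_integral_le
    (Real.continuous_rpow_const (div_nonneg (hp.le.trans hpq) hp.le)).continuousOn isClosed_Ici
    (by filter_upwards [hX0] with ω hω using Real.rpow_nonneg hω p)
    (integrable_rpow_of_le hX hX0 hXq hp.le hpq) ((integrable_congr hpow).2 hXq)

lemma integral_mul_le_sqrt_mul_sqrt {f g : Ω → ℝ} (hf0 : 0 ≤ᵐ[μ] f) (hg0 : 0 ≤ᵐ[μ] g)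
    (hf : MemLp f 2 μ) (hg : MemLp g 2 μ) :
    ∫ ω, f ω * g ω ∂μ ≤ √(∫ ω, f ω ^ 2 ∂μ) * √(∫ ω, g ω ^ 2 ∂μ) := by
  have h2 : ENNReal.ofReal 2 = 2 := by norm_num
  have hfg := integral_mul_le_Lp_mul_Lq_of_nonneg Real.HolderConjugate.two_two hf0 hg0
    (h2 ▸ hf) (h2 ▸ hg)
  simpa only [Real.rpow_two, ← Real.sqrt_eq_rpow] using hfg

lemma memLp_two_rpow [IsFiniteMeasure μ] {X : Ω → ℝ} {α : ℝ} (hα0 : 0 < α) (hα1 : α ≤ 1)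
    (hX : MemLp X 2 μ) (hX0 : 0 ≤ᵐ[μ] X) : MemLp (fun ω => X ω ^ α) 2 μ := by
  have hX2 : Integrable (fun ω => X ω ^ (2 : ℝ)) μ := by
    simpa only [Real.rpow_two] using hX.integrable_sq
  refine (memLp_two_iff_integrable_sq
    ((Real.continuous_rpow_const hα0.le).comp_aestronglyMeasurable hX.1)).2 ?_
  refine (integrable_congr ?_).2
    (integrable_rpow_of_le (c := 2 * α) hX.1 hX0 hX2 (by positivity) (by linarith))
  filter_upwards [hX0] with ω hω
  rw [← Real.rpow_natCast, ← Real.rpow_mul hω]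
  ring_nf

lemma integral_abs_sub_mul_max_rpow_le [IsProbabilityMeasure μ] {X : Ω → ℝ} {α : ℝ}
    (hα0 : 0 < α) (hα1 : α ≤ 1) (hX : MemLp X 2 μ) (hX0 : 0 ≤ᵐ[μ] X) :
    ∫ ω, |X ω - μ[X]| * max (μ[X] ^ α) (X ω ^ α) ∂μ
      ≤ √(Var[X; μ]) * √(μ[X] ^ (2 * α) + ∫ ω, X ω ^ (2 * α) ∂μ) := by
  set m := μ[X]
  have hm : 0 ≤ m := integral_nonneg_of_ae hX0
  set g := fun ω => max (m ^ α) (X ω ^ α)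
  have hsq : ∀ {x : ℝ}, 0 ≤ x → (x ^ α) ^ 2 = x ^ (2 * α) := fun hx => by
    rw [← Real.rpow_natCast, ← Real.rpow_mul hx]; ring_nf
  have hXα := memLp_two_rpow hα0 hα1 hX hX0
  have hX2α : Integrable (fun ω => X ω ^ (2 * α)) μ :=
    (integrable_congr (by filter_upwards [hX0] with ω hω using hsq hω)).1 hXα.integrable_sq
  have hg : MemLp g 2 μ := (memLp_const (m ^ α)).sup hXα
  have hg_sq : ∀ᵐ ω ∂μ, g ω ^ 2 ≤ m ^ (2 * α) + X ω ^ (2 * α) := by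
    filter_upwards [hX0] with ω hω
    rw [← hsq hm, ← hsq hω]
    rcases max_cases (m ^ α) (X ω ^ α) with ⟨h, -⟩ | ⟨h, -⟩ <;>
      simp only [g, h, le_add_iff_nonneg_left, le_add_iff_nonneg_right, sq_nonneg]
  have hg0 : 0 ≤ᵐ[μ] g := by
    filter_upwards [hX0] with ω hω using (Real.rpow_nonneg hω α).trans (le_max_right _ _)
  have hdev : MemLp (fun ω => |X ω - m|) 2 μ := (hX.sub (memLp_const m)).abs
  have hvar : ∫ ω, |X ω - m| ^ 2 ∂μ = Var[X; μ] := by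
    simp only [sq_abs, variance_eq_integral hX.1.aemeasurable, m]
  have hg2 : ∫ ω, g ω ^ 2 ∂μ ≤ m ^ (2 * α) + ∫ ω, X ω ^ (2 * α) ∂μ := by
    refine (integral_mono_ae hg.integrable_sq ((integrable_const _).add hX2α) hg_sq).trans_eq ?_
    rw [integral_add' (integrable_const _) hX2α, integral_const, probReal_univ, one_smul]
  calc ∫ ω, |X ω - m| * g ω ∂μ ≤ √(∫ ω, |X ω - m| ^ 2 ∂μ) * √(∫ ω, g ω ^ 2 ∂μ) :=
        integral_mul_le_sqrt_mul_sqrt (ae_of_all _ fun ω => abs_nonneg _) hg0 hdev hg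
    _ ≤ √(Var[X; μ]) * √(m ^ (2 * α) + ∫ ω, X ω ^ (2 * α) ∂μ) := by
        rw [hvar]
        gcongr

lemma rpow_integral_sub_variance_le_integral_rpow [IsProbabilityMeasure μ] {X : Ω → ℝ} {α : ℝ}
    (hα0 : 0 < α) (hα1 : α ≤ 1) (hX : MemLp X 2 μ) (hX0 : 0 ≤ᵐ[μ] X) (hm : 0 < μ[X]) :
    μ[X] ^ α - (1 - α) * √(Var[X; μ]) * √(μ[X] ^ (2 * α) + ∫ ω, X ω ^ (2 * α) ∂μ) / μ[X]
      ≤ ∫ ω, X ω ^ α ∂μ := by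
  set m := μ[X]
  have hX1 : Integrable X μ := hX.integrable one_le_two
  have hcentered_int : Integrable (fun ω => X ω / m - 1) μ :=
    (hX1.div_const m).sub (integrable_const 1)
  have hcentered : ∫ ω, (X ω / m - 1) ∂μ = 0 := by
    rw [integral_sub (hX1.div_const m) (integrable_const 1), integral_div,
      integral_const, probReal_univ, one_smul, div_self hm.ne', sub_self]
  have hlin : Integrable (fun ω => m ^ α + α * m ^ α * (X ω / m - 1)) μ :=
    (integrable_const _).add (hcentered_int.const_mul _)
  have hcorr : Integrable (fun ω => (1 - α) * (|X ω - m| * max (m ^ α) (X ω ^ α)) / m) μ :=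
    (((hX.sub (memLp_const m)).abs.integrable_mul
      ((memLp_const (m ^ α)).sup (memLp_two_rpow hα0 hα1 hX hX0))).const_mul _).div_const m
  have hpt : ∀ᵐ ω ∂μ, m ^ α + α * m ^ α * (X ω / m - 1)
      - (1 - α) * (|X ω - m| * max (m ^ α) (X ω ^ α)) / m ≤ X ω ^ α := by
    filter_upwards [hX0] with ω hω
    exact rpow_add_mul_sub_abs_mul_max_le_rpow hα0 hα1 hm hω
  calc m ^ α - (1 - α) * √(Var[X; μ]) * √(m ^ (2 * α) + ∫ ω, X ω ^ (2 * α) ∂μ) / m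
      ≤ m ^ α - (1 - α) * (∫ ω, |X ω - m| * max (m ^ α) (X ω ^ α) ∂μ) / m := by
        rw [mul_assoc (1 - α)]
        gcongr
        exact integral_abs_sub_mul_max_rpow_le hα0 hα1 hX hX0
    _ = ∫ ω, (m ^ α + α * m ^ α * (X ω / m - 1)
          - (1 - α) * (|X ω - m| * max (m ^ α) (X ω ^ α)) / m) ∂μ := by
        rw [integral_sub hlin hcorr, integral_add (integrable_const _)
            (hcentered_int.const_mul _), integral_const_mul, hcentered, integral_div,
          integral_const_mul, integral_const, probReal_univ, one_smul, mul_zero, add_zero]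
    _ ≤ ∫ ω, X ω ^ α ∂μ := integral_mono_ae (hlin.sub hcorr)
        ((memLp_two_rpow hα0 hα1 hX hX0).integrable one_le_two) hpt

end Moments

noncomputable def empiricalMean {Ω : Type*} (n : ℕ) (Y : Fin n → Ω → ℝ) (ω : Ω) : ℝ :=
  1 / (n : ℝ) * ∑ i, Y i ω

lemma rpow_empiricalMean_le {Ω : Type*} {n : ℕ} {Y : Fin n → Ω → ℝ} {ω : Ω} {r : ℝ}
    (hn : n ≠ 0) (hr : 1 ≤ r) (hY : ∀ i, 0 ≤ Y i ω) :
    empiricalMean n Y ω ^ r ≤ empiricalMean n (fun i ω => Y i ω ^ r) ω := by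
  simp only [empiricalMean, mul_sum]
  refine Real.rpow_arith_mean_le_arith_mean_rpow univ _ _ (fun i _ => by positivity) ?_
    (fun i _ => hY i) hr
  simp only [sum_const, card_univ, Fintype.card_fin, nsmul_eq_mul]
  field_simp

section EmpiricalMean

variable {Ω : Type*} [MeasurableSpace Ω] {μ : Measure Ω} {n : ℕ} {Y : Fin n → Ω → ℝ}

lemma empiricalMean_nonneg (hY : ∀ i, 0 ≤ᵐ[μ] Y i) : 0 ≤ᵐ[μ] empiricalMean n Y := by
  filter_upwards [ae_all_iff.2 hY] with ω hω
  exact mul_nonneg (by positivity) (sum_nonneg fun i _ => hω i)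

lemma memLp_empiricalMean {q : ENNReal} (hY : ∀ i, MemLp (Y i) q μ) :
    MemLp (empiricalMean n Y) q μ :=
  (memLp_finsetSum univ fun i _ => hY i).const_mul _

lemma integral_empiricalMean {W : Ω → ℝ} (hn : n ≠ 0) (hid : ∀ i, IdentDistrib (Y i) W μ μ)
    (hW : Integrable W μ) : ∫ ω, empiricalMean n Y ω ∂μ = ∫ ω, W ω ∂μ := by
  simp only [empiricalMean]
  rw [integral_const_mul, integral_finsetSum _ fun i _ => (hid i).integrable_iff.2 hW]
  simp only [fun i => (hid i).integral_eq, sum_const, card_univ, Fintype.card_fin, nsmul_eq_mul]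
  field_simp

lemma variance_empiricalMean {W : Ω → ℝ} (hY : ∀ i, MemLp (Y i) 2 μ)
    (hind : Pairwise fun i j => IndepFun (Y i) (Y j) μ) (hid : ∀ i, IdentDistrib (Y i) W μ μ) :
    Var[empiricalMean n Y; μ] = Var[W; μ] / n := by
  have hsum : Var[∑ i, Y i; μ] = n * Var[W; μ] := by
    rw [IndepFun.variance_sum (fun i _ => hY i) fun i _ j _ hij => hind hij]
    simp [fun i => (hid i).variance_eq]
  have : empiricalMean n Y = fun ω => 1 / (n : ℝ) * (∑ i, Y i) ω := by
    ext ω; simp [empiricalMean, Finset.sum_apply]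
  rw [this, variance_const_mul, hsum]
  rcases eq_or_ne n 0 with rfl | hn
  · simp
  · field_simp

lemma integral_rpow_empiricalMean_le {Z : Ω → ℝ} {Zi : Fin n → Ω → ℝ} {p q : ℝ} (hn : n ≠ 0)
    (hp : 0 < p) (hpq : p ≤ q) (hZ0 : 0 ≤ᵐ[μ] Z) (hZq : Integrable (fun ω => Z ω ^ q) μ)
    (hid : ∀ i, IdentDistrib (Zi i) Z μ μ) :
    ∫ ω, empiricalMean n (fun i ω => Zi i ω ^ p) ω ^ (q / p) ∂μ ≤ ∫ ω, Z ω ^ q ∂μ := by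
  have hid_pow : ∀ i, IdentDistrib (fun ω => Zi i ω ^ q) (fun ω => Z ω ^ q) μ μ :=
    fun i => (hid i).comp (measurable_id.pow_const q)
  have hZi0 : ∀ i, 0 ≤ᵐ[μ] Zi i := fun i => (hid i).symm.ae_snd measurableSet_Ici hZ0
  have hbound : Integrable (empiricalMean n fun i ω => Zi i ω ^ q) μ :=
    memLp_one_iff_integrable.1 <| memLp_empiricalMean fun i =>
      memLp_one_iff_integrable.2 ((hid_pow i).integrable_iff.2 hZq)
  refine (integral_mono_of_nonneg ?_ hbound ?_).trans_eq (integral_empiricalMean hn hid_pow hZq)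
  · filter_upwards [ae_all_iff.2 hZi0] with ω hω
    exact Real.rpow_nonneg (mul_nonneg (by positivity)
      (sum_nonneg fun i _ => Real.rpow_nonneg (hω i) p)) _
  · filter_upwards [ae_all_iff.2 hZi0] with ω hω
    refine (rpow_empiricalMean_le hn ((one_le_div hp).2 hpq)
      fun i => Real.rpow_nonneg (hω i) p).trans_eq ?_
    simp only [empiricalMean, ← Real.rpow_mul (hω _), mul_div_cancel₀ _ hp.ne']

lemma rpow_integral_sub_variance_le_integral_rpow_empiricalMean [IsProbabilityMeasure μ]
    {Z : Ω → ℝ} {Zi : Fin n → Ω → ℝ} {p : ℝ} (hn : n ≠ 0) (hp1 : 1 ≤ p) (hp2 : p ≤ 2)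
    (hZm : AEStronglyMeasurable Z μ) (hZ0 : 0 ≤ᵐ[μ] Z) (hm : 0 < ∫ ω, Z ω ^ p ∂μ)
    (hmom : Integrable (fun ω => Z ω ^ (2 * p)) μ) (hid : ∀ i, IdentDistrib (Zi i) Z μ μ)
    (hindep : iIndepFun Zi μ) :
    (∫ ω, Z ω ^ p ∂μ) ^ (1 / p) - (1 - 1 / p) * √(Var[fun ω => Z ω ^ p; μ] / n) *
        √(2 * ∫ ω, Z ω ^ (2 : ℝ) ∂μ) / ∫ ω, Z ω ^ p ∂μ
      ≤ ∫ ω, empiricalMean n (fun i ω => Zi i ω ^ p) ω ^ (1 / p) ∂μ := by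
  have hp0 : 0 < p := by linarith
  set m := ∫ ω, Z ω ^ p ∂μ
  set Y : Fin n → Ω → ℝ := fun i ω => Zi i ω ^ p
  have hZ2 : Integrable (fun ω => Z ω ^ (2 : ℝ)) μ :=
    integrable_rpow_of_le hZm hZ0 hmom zero_le_two (by linarith)
  have hZp2 : MemLp (fun ω => Z ω ^ p) 2 μ := by
    refine (memLp_two_iff_integrable_sq
      ((Real.continuous_rpow_const hp0.le).comp_aestronglyMeasurable hZm)).2 ?_
    refine (integrable_congr ?_).1 hmom
    filter_upwards [hZ0] with ω hω
    rw [← Real.rpow_natCast, ← Real.rpow_mul hω]; push_cast; ring_nf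
  have hid_pow : ∀ i, IdentDistrib (Y i) (fun ω => Z ω ^ p) μ μ :=
    fun i => (hid i).comp (measurable_id.pow_const p)
  have hY0 : ∀ i, 0 ≤ᵐ[μ] Y i := fun i => by
    filter_upwards [(hid i).symm.ae_snd measurableSet_Ici hZ0] with ω hω
    exact Real.rpow_nonneg hω p
  have hYp2 : ∀ i, MemLp (Y i) 2 μ := fun i => (hid_pow i).symm.memLp_snd hZp2
  have hTmean : μ[empiricalMean n Y] = m :=
    integral_empiricalMean hn hid_pow (hZp2.integrable one_le_two)
  have hTvar : Var[empiricalMean n Y; μ] = Var[fun ω => Z ω ^ p; μ] / n := by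
    refine variance_empiricalMean hYp2 (fun i j hij => ?_) hid_pow
    exact (hindep.comp (fun _ x => x ^ p) fun _ => measurable_id.pow_const p).indepFun hij
  have hsecond : m ^ (2 / p) + ∫ ω, empiricalMean n Y ω ^ (2 / p) ∂μ
      ≤ 2 * ∫ ω, Z ω ^ (2 : ℝ) ∂μ := by
    linarith [rpow_integral_rpow_le_integral_rpow hp0 hp2 hZm hZ0 hZ2,
      integral_rpow_empiricalMean_le hn hp0 hp2 hZ0 hZ2 hid]
  have key := rpow_integral_sub_variance_le_integral_rpow (α := 1 / p) (by positivity)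
    (by rw [div_le_one hp0]; exact hp1) (memLp_empiricalMean hYp2) (empiricalMean_nonneg hY0)
    (hTmean ▸ hm)
  rw [hTmean, hTvar, mul_one_div] at key
  refine le_trans ?_ key
  have hcoef : 0 ≤ 1 - 1 / p := by rw [sub_nonneg, div_le_one hp0]; exact hp1
  gcongr

end EmpiricalMean

theorem stmt5_general {Ω : Type*} [MeasurableSpace Ω] (μ : Measure Ω) [IsProbabilityMeasure μ]
    (n : ℕ) (hn : 1 ≤ n) (p : ℝ) (hp1 : 1 ≤ p) (hp2 : p ≤ 2)
    (Z : Ω → ℝ) (hZm : Measurable Z) (hZ0 : ∀ ω, 0 ≤ Z ω)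
    (hZne : ¬ Z =ᵐ[μ] (fun _ => (0 : ℝ)))
    (hmom : Integrable (fun ω => Z ω ^ (2 * p)) μ)
    (Zi : Fin n → Ω → ℝ)
    (hid : ∀ i, IdentDistrib (Zi i) Z μ μ)
    (hindep : iIndepFun Zi μ) :
    (∫ ω, Z ω ^ p ∂μ) ^ (1 / p) -
        ((p - 1) / p) * Real.sqrt (2 / n) *
          Real.sqrt (∫ ω, (Z ω ^ p / (∫ ω', Z ω' ^ p ∂μ) - 1) ^ 2 ∂μ) *
          (∫ ω, Z ω ^ (2 : ℝ) ∂μ) ^ (1 / (2 : ℝ)) ≤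
      ∫ ω, ((1 / (n : ℝ)) * ∑ i, Zi i ω ^ p) ^ (1 / p) ∂μ := by
  have hp0 : 0 < p := by linarith
  have hZ0' : 0 ≤ᵐ[μ] Z := ae_of_all _ hZ0
  have hm : 0 < ∫ ω, Z ω ^ p ∂μ := integral_rpow_pos hp0.ne' hZ0 hZne
    (integrable_rpow_of_le hZm.aestronglyMeasurable hZ0' hmom hp0.le (by linarith))
  have key := rpow_integral_sub_variance_le_integral_rpow_empiricalMean (by omega) hp1 hp2
    hZm.aestronglyMeasurable hZ0' hm hmom hid hindep
  set m := ∫ ω, Z ω ^ p ∂μ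
  have hdev : ∫ ω, (Z ω ^ p / m - 1) ^ 2 ∂μ = Var[fun ω => Z ω ^ p; μ] / m ^ 2 := by
    rw [variance_eq_integral (hZm.pow_const p).aemeasurable, ← integral_div]
    congr 1 with ω
    field_simp
    rfl
  refine le_trans (le_of_eq ?_) key
  rw [hdev, ← Real.sqrt_eq_rpow, Real.sqrt_div' _ (sq_nonneg m), Real.sqrt_sq hm.le,
    Real.sqrt_div' _ n.cast_nonneg, Real.sqrt_div' _ n.cast_nonneg, Real.sqrt_mul zero_le_two]
  field_simp

/-- Lower bound on the expected empirical `L^p` moment: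
`E[((1/n) ∑ᵢ Zᵢᵖ)^{1/p}] ≥ ‖Z‖_p - ((p-1)/p) √(2/n) √(Var(Zᵖ/E[Zᵖ])) ‖Z‖₂`
for i.i.d. copies `Z₁, …, Z_n` of a nonzero nonnegative random variable `Z`
with finite `2p`-th moment, `1 ≤ p ≤ 2`. -/
theorem stmt5 {Ω : Type*} [MeasurableSpace Ω] (μ : Measure Ω) [IsProbabilityMeasure μ]
    (n : ℕ) (hn : 1 ≤ n) (p : ℝ) (hp1 : 1 ≤ p) (hp2 : p ≤ 2)
    (Z : Ω → ℝ) (hZm : Measurable Z) (hZ0 : ∀ ω, 0 ≤ Z ω)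
    (hZne : ¬ Z =ᵐ[μ] (fun _ => (0 : ℝ)))
    (hmom : Integrable (fun ω => Z ω ^ (2 * p)) μ)
    (Zi : Fin n → Ω → ℝ) (hZim : ∀ i, Measurable (Zi i))
    (hid : ∀ i, IdentDistrib (Zi i) Z μ μ)
    (hindep : iIndepFun Zi μ) :
    (∫ ω, Z ω ^ p ∂μ) ^ (1 / p) -
        ((p - 1) / p) * Real.sqrt (2 / n) *
          Real.sqrt (∫ ω, (Z ω ^ p / (∫ ω', Z ω' ^ p ∂μ) - 1) ^ 2 ∂μ) *
          (∫ ω, Z ω ^ (2 : ℝ) ∂μ) ^ (1 / (2 : ℝ)) ≤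
      ∫ ω, ((1 / (n : ℝ)) * ∑ i, Zi i ω ^ p) ^ (1 / p) ∂μ :=
  stmt5_general μ n hn p hp1 hp2 Z hZm hZ0 hZne hmom Zi hid hindep
end

section
/- Let Z ≥ 0 be a nonzero random variable with ‖Z‖_∞ ≤ C (i.e., Z ≤ C almost surely), let 1 ≤ p ≤ 2, and let Z₁,…,Z_n be i.i.d. copies of Z. Then E[ ((1/n) ∑_{i=1}^n Z_i^p)^{1/p} ] ≥ ‖Z‖_p − C ((p−1)/p) √(2/n), where ‖Z‖_p = (E[Z^p])^{1/p}. -/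
/-!
Put `α = 1 / p ∈ [1/2, 1]`, `m = E[Z ^ p]` and let `S` be the empirical mean of the `Zᵢ ^ p`.
The concave function `x ↦ x ^ α` stays above its tangent at `m` up to an error
`√2 (1 - α) m ^ (-α) |x - m| ^ (2α)`. Taking expectations, the linear term vanishes and Jensen
bounds `E|S - m| ^ (2α)` by `(Var S) ^ α`. Since `0 ≤ Z ^ p ≤ C ^ p`, `Var S ≤ C ^ p m / n`, and
the error becomes at most `(1 - α) C √(2 / n)`.
-/

open MeasureTheory ProbabilityTheory Finset

namespace Real

lemma rpow_le_one_sub_add_mul {θ a : ℝ} (hθ₀ : 0 ≤ θ) (hθ₁ : θ ≤ 1) (ha : 0 ≤ a) :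
    a ^ θ ≤ 1 - θ + θ * a := by
  have h := rpow_one_add_le_one_add_mul_self (s := a - 1) (by linarith) hθ₀ hθ₁
  rw [add_sub_cancel] at h
  linarith

lemma mul_rpow_two_sub_two_mul_le {α w : ℝ} (hα₀ : 1 / 2 ≤ α) (hα₁ : α ≤ 1) (hw : 0 ≤ w) :
    α * w ^ (2 - 2 * α) ≤ √2 * (1 + (1 - α) * w) := by
  set s := 2 - 2 * α
  have hs₀ : 0 ≤ s := by linarith
  have hs₁ : s ≤ 1 := by linarith
  have hr₀ : 0 < √2 := by positivity
  have hr : √2 ^ 2 = 2 := sq_sqrt zero_le_two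
  have hr₁ : 1 ≤ √2 := one_le_sqrt.mpr one_le_two
  have hr₂ : √2 < 3 / 2 := by nlinarith
  -- Bernoulli applied to `w ^ s` itself is too weak for large `w`; rescaling by `√2` fixes it.
  have hsplit : w ^ s = √2 ^ s * (w / √2) ^ s := by
    rw [← mul_rpow hr₀.le (by positivity), mul_div_cancel₀ _ hr₀.ne']
  have h₁ := rpow_le_one_sub_add_mul hs₀ hs₁ hr₀.le
  have h₂ := rpow_le_one_sub_add_mul hs₀ hs₁ (div_nonneg hw hr₀.le)
  have hA : α * (1 - s + s * √2) ≤ 1 := by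
    nlinarith [mul_nonneg hs₀ (by linarith : (0:ℝ) ≤ 3 / 2 - √2),
      mul_nonneg (sq_nonneg s) (by linarith : (0:ℝ) ≤ √2 - 1)]
  have hw' : w / √2 = √2 / 2 * w := by field_simp; rw [hr]
  calc α * w ^ s ≤ α * ((1 - s + s * √2) * (1 - s + s * (w / √2))) := by
        rw [hsplit]
        gcongr
    _ ≤ 1 * (1 - s + s * (w / √2)) := by
        rw [← mul_assoc]; gcongr
    _ ≤ √2 * (1 + (1 - α) * w) := by
        rw [hw']; nlinarith [mul_nonneg hs₀ hw]

lemma one_sub_add_mul_sub_rpow_le {α u : ℝ} (hα₀ : 1 / 2 ≤ α) (hα₁ : α ≤ 1) (hu : 0 ≤ u) :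
    1 - α + α * u - u ^ α ≤ √2 * (1 - α) * |u - 1| ^ (2 * α) := by
  set B := α + (1 - α) * u
  set v := |u - 1|
  have hB : 0 < B := by positivity
  have hu_le : u ≤ u ^ α * B := by
    calc u = u ^ α * u ^ (1 - α) := by
          rw [← rpow_add' hu (by norm_num), add_sub_cancel, rpow_one]
      _ ≤ u ^ α * B := by
        gcongr
        linarith [rpow_le_one_sub_add_mul (by linarith : 0 ≤ 1 - α) (by linarith) hu]
  -- `(1 - α + α * u) * B - u = α * (1 - α) * (u - 1) ^ 2`
  have hquad : (1 - α + α * u - u ^ α) * B ≤ α * (1 - α) * (u - 1) ^ 2 := by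
    nlinarith
  have hsq : (u - 1) ^ 2 = v ^ (2 * α) * v ^ (2 - 2 * α) := by
    rw [← rpow_add' (abs_nonneg _) (by norm_num), add_sub_cancel, rpow_two, sq_abs]
  have hv : α * v ^ (2 - 2 * α) ≤ √2 * B := by
    rcases le_total u 1 with h | h
    · have hv₁ : v ^ (2 - 2 * α) ≤ 1 :=
        rpow_le_one (abs_nonneg _) (by rw [abs_le]; constructor <;> linarith) (by linarith)
      have : α ≤ B := by simp only [B]; nlinarith
      nlinarith [one_le_sqrt.mpr one_le_two]
    · have hvu : v = u - 1 := abs_of_nonneg (by linarith)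
      have hBv : B = 1 + (1 - α) * v := by rw [hvu]; ring
      rw [hBv]
      exact mul_rpow_two_sub_two_mul_le hα₀ hα₁ (abs_nonneg _)
  have hfin : α * (1 - α) * (u - 1) ^ 2 ≤ √2 * (1 - α) * v ^ (2 * α) * B := by
    rw [hsq]
    have := mul_le_mul_of_nonneg_left hv
      (mul_nonneg (by linarith : 0 ≤ 1 - α) (rpow_nonneg (abs_nonneg (u - 1)) (2 * α)))
    linarith
  exact le_of_mul_le_mul_right (hquad.trans hfin) hB

lemma rpow_tangent_sub_rpow_le {α t x : ℝ} (hα₀ : 1 / 2 ≤ α) (hα₁ : α ≤ 1) (ht : 0 < t)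
    (hx : 0 ≤ x) :
    t ^ α + α * t ^ (α - 1) * (x - t) - x ^ α ≤ √2 * (1 - α) * |x - t| ^ (2 * α) / t ^ α := by
  obtain ⟨u, hu, rfl⟩ : ∃ u, 0 ≤ u ∧ x = t * u := ⟨x / t, by positivity, by field_simp⟩
  have htα : 0 < t ^ α := rpow_pos_of_pos ht α
  have habs : |t * u - t| ^ (2 * α) = t ^ α * t ^ α * |u - 1| ^ (2 * α) := by
    rw [← mul_sub_one, abs_mul, abs_of_pos ht, mul_rpow ht.le (abs_nonneg _),
      ← rpow_add ht, two_mul]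
  rw [habs, mul_rpow ht.le hu, rpow_sub_one ht.ne']
  calc t ^ α + α * (t ^ α / t) * (t * u - t) - t ^ α * u ^ α
      = t ^ α * (1 - α + α * u - u ^ α) := by field_simp; ring
    _ ≤ t ^ α * (√2 * (1 - α) * |u - 1| ^ (2 * α)) := by
        gcongr; exact one_sub_add_mul_sub_rpow_le hα₀ hα₁ hu
    _ = √2 * (1 - α) * (t ^ α * t ^ α * |u - 1| ^ (2 * α)) / t ^ α := by
        field_simp

lemma abs_rpow_two_mul (x α : ℝ) : |x| ^ (2 * α) = (x ^ 2) ^ α := by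
  rw [rpow_mul (abs_nonneg x), rpow_two, sq_abs]

lemma sqrt_two_mul_one_sub_one_div_mul_rpow_le {C p n : ℝ} (hC : 0 ≤ C) (hn : 1 ≤ n)
    (hp₁ : 1 ≤ p) (hp₂ : p ≤ 2) :
    √2 * (1 - 1 / p) * (C ^ p / n) ^ (1 / p) ≤ C * ((p - 1) / p) * √(2 / n) := by
  have hp₀ : 0 < p := by linarith
  have hsqrt : √n ≤ n ^ (1 / p) := by
    rw [sqrt_eq_rpow]
    exact rpow_le_rpow_of_exponent_le hn (by gcongr)
  have hrate : √2 * (C ^ p / n) ^ (1 / p) ≤ C * √(2 / n) := by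
    rw [div_rpow (by positivity) (by linarith), ← rpow_mul hC, mul_one_div_cancel hp₀.ne',
      rpow_one, sqrt_div zero_le_two, mul_div_assoc', mul_div_assoc', mul_comm C]
    gcongr
  have hcoef : (p - 1) / p = 1 - 1 / p := by field_simp
  have h1p : 0 ≤ 1 - 1 / p := by rw [← hcoef]; positivity
  rw [hcoef, mul_right_comm √2, mul_right_comm C]
  exact mul_le_mul_of_nonneg_right hrate h1p

end Real

namespace MeasureTheory

variable {Ω : Type*} [MeasurableSpace Ω] {μ : Measure Ω} {X : Ω → ℝ} {θ : ℝ}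

lemma Integrable.rpow_of_nonneg_of_le_one [IsFiniteMeasure μ] (hX : Integrable X μ)
    (hX₀ : 0 ≤ᵐ[μ] X) (hθ₀ : 0 ≤ θ) (hθ₁ : θ ≤ 1) : Integrable (fun ω => X ω ^ θ) μ := by
  refine ((integrable_const 1).add hX).mono'
    (hX.aemeasurable.pow_const θ).aestronglyMeasurable ?_
  filter_upwards [hX₀] with ω (hω : 0 ≤ X ω)
  rw [Real.norm_of_nonneg (Real.rpow_nonneg hω θ), Pi.add_apply]
  nlinarith [Real.rpow_le_one_sub_add_mul hθ₀ hθ₁ hω]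

lemma integral_rpow_le_rpow_integral [IsProbabilityMeasure μ] (hX : Integrable X μ)
    (hX₀ : 0 ≤ᵐ[μ] X) (hθ₀ : 0 ≤ θ) (hθ₁ : θ ≤ 1) :
    ∫ ω, X ω ^ θ ∂μ ≤ (∫ ω, X ω ∂μ) ^ θ :=
  (Real.concaveOn_rpow hθ₀ hθ₁).le_map_integral (Real.continuous_rpow_const hθ₀).continuousOn
    isClosed_Ici hX₀ hX (hX.rpow_of_nonneg_of_le_one hX₀ hθ₀ hθ₁)

lemma integral_rpow_pos (hX : Integrable (fun ω => X ω ^ θ) μ) (hX₀ : 0 ≤ᵐ[μ] X) (hθ : θ ≠ 0)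
    (hne : ¬ X =ᵐ[μ] 0) : 0 < ∫ ω, X ω ^ θ ∂μ := by
  have hXθ₀ : 0 ≤ᵐ[μ] fun ω => X ω ^ θ := by
    filter_upwards [hX₀] with ω (hω : 0 ≤ X ω) using Real.rpow_nonneg hω θ
  refine (integral_nonneg_of_ae hXθ₀).lt_of_ne fun h => hne ?_
  filter_upwards [(integral_eq_zero_iff_of_nonneg_ae hXθ₀ hX).1 h.symm, hX₀] with ω hω hω₀
  exact (Real.rpow_eq_zero hω₀ hθ).1 hω

end MeasureTheory

namespace ProbabilityTheory

variable {Ω : Type*} [MeasurableSpace Ω] {μ : Measure Ω}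

lemma integral_abs_sub_rpow_le_variance_rpow [IsProbabilityMeasure μ] {S : Ω → ℝ} {α : ℝ}
    (hS : MemLp S 2 μ) (hα₀ : 0 ≤ α) (hα₁ : α ≤ 1) :
    ∫ ω, |S ω - μ[S]| ^ (2 * α) ∂μ ≤ Var[S; μ] ^ α := by
  simp only [Real.abs_rpow_two_mul, variance_eq_integral hS.aemeasurable]
  exact integral_rpow_le_rpow_integral (hS.sub (memLp_const _)).integrable_sq
    (ae_of_all _ fun _ => sq_nonneg _) hα₀ hα₁

lemma rpow_integral_sub_le_integral_rpow [IsProbabilityMeasure μ] {S : Ω → ℝ} {α : ℝ}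
    (hS : MemLp S 2 μ) (hS₀ : 0 ≤ᵐ[μ] S) (hm : 0 < μ[S]) (hα₀ : 1 / 2 ≤ α) (hα₁ : α ≤ 1) :
    μ[S] ^ α - √2 * (1 - α) * Var[S; μ] ^ α / μ[S] ^ α ≤ ∫ ω, S ω ^ α ∂μ := by
  set m := μ[S]
  set c := √2 * (1 - α) / m ^ α
  have hc : 0 ≤ c := div_nonneg (by nlinarith [Real.sqrt_nonneg 2]) (by positivity)
  have hdev_int : Integrable (fun ω => |S ω - m| ^ (2 * α)) μ := by
    simp only [Real.abs_rpow_two_mul]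
    exact (hS.sub (memLp_const m)).integrable_sq.rpow_of_nonneg_of_le_one
      (ae_of_all _ fun _ => sq_nonneg _) (by linarith) hα₁
  have hpointwise : ∀ᵐ ω ∂μ, m ^ α + α * m ^ (α - 1) * (S ω - m) - c * |S ω - m| ^ (2 * α)
      ≤ S ω ^ α := by
    filter_upwards [hS₀] with ω (hω : 0 ≤ S ω)
    have := Real.rpow_tangent_sub_rpow_le hα₀ hα₁ hm hω
    rw [mul_div_right_comm] at this
    linarith
  have hS_int : Integrable S μ := hS.integrable one_le_two
  have hcentered_int : Integrable (fun ω => α * m ^ (α - 1) * (S ω - m)) μ :=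
    (hS_int.sub (integrable_const m)).const_mul _
  have hlin_int : Integrable (fun ω => m ^ α + α * m ^ (α - 1) * (S ω - m)) μ :=
    (integrable_const _).add hcentered_int
  have hlin : ∫ ω, m ^ α + α * m ^ (α - 1) * (S ω - m) ∂μ = m ^ α := by
    rw [integral_add (integrable_const _) hcentered_int, integral_const_mul,
      integral_sub hS_int (integrable_const m)]
    simp [m]
  have hmono : ∫ ω, m ^ α + α * m ^ (α - 1) * (S ω - m) - c * |S ω - m| ^ (2 * α) ∂μ
      ≤ ∫ ω, S ω ^ α ∂μ :=
    integral_mono_ae (hlin_int.sub (hdev_int.const_mul c))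
      (hS_int.rpow_of_nonneg_of_le_one hS₀ (by linarith) hα₁) hpointwise
  rw [integral_sub hlin_int (hdev_int.const_mul c), integral_const_mul, hlin] at hmono
  calc m ^ α - √2 * (1 - α) * Var[S; μ] ^ α / m ^ α = m ^ α - c * Var[S; μ] ^ α := by
        rw [mul_div_right_comm]
    _ ≤ m ^ α - c * ∫ ω, |S ω - m| ^ (2 * α) ∂μ := by
        gcongr; exact integral_abs_sub_rpow_le_variance_rpow hS (by linarith) hα₁
    _ ≤ ∫ ω, S ω ^ α ∂μ := hmono

lemma variance_mean_le {ι : Type*} [Fintype ι] {Y : ι → Ω → ℝ} {v : ℝ}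
    (hindep : iIndepFun Y μ) (hY : ∀ i, MemLp (Y i) 2 μ) (hv : ∀ i, Var[Y i; μ] ≤ v) :
    Var[fun ω => 1 / (Fintype.card ι : ℝ) * ∑ i, Y i ω; μ] ≤ v / Fintype.card ι := by
  have hsum : Var[fun ω => ∑ i, Y i ω; μ] = ∑ i, Var[Y i; μ] := by
    simpa only [Finset.sum_fn] using
      IndepFun.variance_sum (s := univ) (fun i _ => hY i) fun i _ j _ hij => hindep.indepFun hij
  rw [variance_const_mul, hsum]
  calc (1 / (Fintype.card ι : ℝ)) ^ 2 * ∑ i, Var[Y i; μ]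
      ≤ (1 / (Fintype.card ι : ℝ)) ^ 2 * (Fintype.card ι * v) := by
        gcongr
        simpa using Finset.sum_le_sum fun i (_ : i ∈ univ) => hv i
    _ = v / Fintype.card ι := by
        rcases (Nat.cast_nonneg (Fintype.card ι) : (0 : ℝ) ≤ _).eq_or_lt with h | h
        · simp [← h]
        · field_simp

lemma rpow_sub_le_integral_rpow_mean [IsProbabilityMeasure μ] {ι : Type*} [Fintype ι]
    [Nonempty ι] {Y : ι → Ω → ℝ} {B m α : ℝ} (hindep : iIndepFun Y μ)
    (hY_meas : ∀ i, AEMeasurable (Y i) μ)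
    (hY : ∀ i, ∀ᵐ ω ∂μ, Y i ω ∈ Set.Icc 0 B) (hY_mean : ∀ i, μ[Y i] = m) (hm : 0 < m)
    (hα₀ : 1 / 2 ≤ α) (hα₁ : α ≤ 1) :
    m ^ α - √2 * (1 - α) * (B / Fintype.card ι) ^ α
      ≤ ∫ ω, (1 / (Fintype.card ι : ℝ) * ∑ i, Y i ω) ^ α ∂μ := by
  set N := (Fintype.card ι : ℝ) with hN_def
  have hN : 0 < N := by simp [N, Fintype.card_pos]
  have hB : 0 ≤ B := by
    obtain ⟨ω, hω⟩ := (hY (Classical.arbitrary ι)).exists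
    exact hω.1.trans hω.2
  have hY_memLp i : MemLp (Y i) 2 μ :=
    memLp_of_bounded (hY i) (hY_meas i).aestronglyMeasurable 2
  set S := fun ω => 1 / N * ∑ i, Y i ω
  have hS : MemLp S 2 μ := (memLp_finsetSum univ fun i _ => hY_memLp i).const_mul _
  have hS₀ : 0 ≤ᵐ[μ] S := by
    filter_upwards [ae_all_iff.2 hY] with ω hω
    exact mul_nonneg (by positivity) (sum_nonneg fun i _ => (hω i).1)
  have hS_mean : μ[S] = m := by
    simp only [S]
    rw [integral_const_mul, integral_finsetSum _ fun i _ => (hY_memLp i).integrable one_le_two]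
    simp only [hY_mean, sum_const, card_univ, nsmul_eq_mul, ← hN_def]
    field_simp
  have hvar : Var[S; μ] ≤ B * m / N := variance_mean_le hindep hY_memLp fun i => by
    have := variance_le_sub_mul_sub (hY i) (hY_meas i)
    rw [hY_mean] at this
    nlinarith
  have key := rpow_integral_sub_le_integral_rpow hS hS₀ (hS_mean ▸ hm) hα₀ hα₁
  rw [hS_mean] at key
  calc m ^ α - √2 * (1 - α) * (B / N) ^ α
      = m ^ α - √2 * (1 - α) * (B * m / N) ^ α / m ^ α := by
        rw [mul_div_right_comm B m N, Real.mul_rpow (by positivity) hm.le]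
        field_simp
    _ ≤ m ^ α - √2 * (1 - α) * Var[S; μ] ^ α / m ^ α := by
        have : 0 ≤ 1 - α := by linarith
        gcongr
        exact variance_nonneg S μ
    _ ≤ ∫ ω, S ω ^ α ∂μ := key

end ProbabilityTheory

theorem stmt6_general {Ω : Type*} [MeasurableSpace Ω] (μ : Measure Ω) [IsProbabilityMeasure μ]
    (n : ℕ) (hn : 1 ≤ n) (p : ℝ) (hp1 : 1 ≤ p) (hp2 : p ≤ 2)
    (Z : Ω → ℝ) (hZm : Measurable Z) (hZ0 : ∀ ω, 0 ≤ Z ω)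
    (C : ℝ) (hZC : ∀ ω, Z ω ≤ C)
    (hZne : ¬ Z =ᵐ[μ] (fun _ => (0 : ℝ)))
    (Zi : Fin n → Ω → ℝ)
    (hid : ∀ i, IdentDistrib (Zi i) Z μ μ)
    (hindep : iIndepFun Zi μ) :
    (∫ ω, Z ω ^ p ∂μ) ^ (1 / p) - C * ((p - 1) / p) * Real.sqrt (2 / n) ≤
      ∫ ω, ((1 / (n : ℝ)) * ∑ i, Zi i ω ^ p) ^ (1 / p) ∂μ := by
  have hp₀ : 0 < p := by linarith
  have hC : 0 ≤ C := by
    obtain ⟨ω⟩ := nonempty_of_isProbabilityMeasure μ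
    exact (hZ0 ω).trans (hZC ω)
  have hpow : Measurable fun x : ℝ => x ^ p := by fun_prop
  have hZp_int : Integrable (fun ω => Z ω ^ p) μ :=
    Integrable.of_bound (hpow.comp hZm).aestronglyMeasurable (C ^ p) <| ae_of_all _ fun ω => by
      rw [Real.norm_of_nonneg (Real.rpow_nonneg (hZ0 ω) p)]
      exact Real.rpow_le_rpow (hZ0 ω) (hZC ω) hp₀.le
  have hm : 0 < ∫ ω, Z ω ^ p ∂μ := integral_rpow_pos hZp_int (ae_of_all _ hZ0) hp₀.ne' hZne
  have hY i : ∀ᵐ ω ∂μ, Zi i ω ^ p ∈ Set.Icc 0 (C ^ p) := by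
    filter_upwards [(hid i).symm.ae_snd measurableSet_Icc
      (ae_of_all _ fun ω => ⟨hZ0 ω, hZC ω⟩)] with ω hω
    exact ⟨Real.rpow_nonneg hω.1 p, Real.rpow_le_rpow hω.1 hω.2 hp₀.le⟩
  have : Nonempty (Fin n) := ⟨⟨0, hn⟩⟩
  have key := rpow_sub_le_integral_rpow_mean (Y := fun i ω => Zi i ω ^ p)
    (m := ∫ ω, Z ω ^ p ∂μ) (hindep.comp (fun _ x => x ^ p) fun _ => hpow)
    (fun i => (hid i).aemeasurable_fst.pow_const p) hY (fun i => ((hid i).comp hpow).integral_eq)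
    hm (one_div_le_one_div_of_le hp₀ hp2) ((div_le_one hp₀).2 hp1)
  rw [Fintype.card_fin] at key
  linarith [Real.sqrt_two_mul_one_sub_one_div_mul_rpow_le hC (n := n) (mod_cast hn) hp1 hp2]

/-- Lower bound on the expected empirical `L^p` moment for a bounded variable:
`E[((1/n) ∑ᵢ Zᵢᵖ)^{1/p}] ≥ ‖Z‖_p - C ((p-1)/p) √(2/n)` for i.i.d. copies
`Z₁, …, Z_n` of a nonzero random variable `0 ≤ Z ≤ C`, with `1 ≤ p ≤ 2`. -/
theorem stmt6 {Ω : Type*} [MeasurableSpace Ω] (μ : Measure Ω) [IsProbabilityMeasure μ]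
    (n : ℕ) (hn : 1 ≤ n) (p : ℝ) (hp1 : 1 ≤ p) (hp2 : p ≤ 2)
    (Z : Ω → ℝ) (hZm : Measurable Z) (hZ0 : ∀ ω, 0 ≤ Z ω)
    (C : ℝ) (hZC : ∀ ω, Z ω ≤ C)
    (hZne : ¬ Z =ᵐ[μ] (fun _ => (0 : ℝ)))
    (Zi : Fin n → Ω → ℝ) (hZim : ∀ i, Measurable (Zi i))
    (hid : ∀ i, IdentDistrib (Zi i) Z μ μ)
    (hindep : iIndepFun Zi μ) :
    (∫ ω, Z ω ^ p ∂μ) ^ (1 / p) - C * ((p - 1) / p) * Real.sqrt (2 / n) ≤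
      ∫ ω, ((1 / (n : ℝ)) * ∑ i, Zi i ω ^ p) ^ (1 / p) ∂μ :=
  stmt6_general μ n hn p hp1 hp2 Z hZm hZ0 C hZC hZne Zi hid hindep
end

section
/- Let x ∈ Δ_d (so x_i ≥ 0 and ∑_i x_i = 1) and let g ∈ ℝ_{≥0}^d. Then the function s(λ) = ( ∑_{i=1}^d g_i² x_i e^{−λ g_i} ) / ( ∑_{j=1}^d x_j e^{−λ g_j} ) is non-increasing on λ ∈ [0, ∞); in particular, s(λ) ≤ s(0) = ∑_{i=1}^d g_i² x_i for all λ ≥ 0. -/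
open Finset

lemma stmt10_key (d : ℕ) (w g h : Fin d → ℝ) (hw : ∀ i, 0 ≤ w i)
    (hmono : ∀ i j, 0 ≤ (g i ^ 2 - g j ^ 2) * (h j - h i)) :
    (∑ i, g i ^ 2 * w i * h i) * (∑ j, w j) ≤
      (∑ i, g i ^ 2 * w i) * (∑ j, w j * h j) := by
  have hnn : 0 ≤ ∑ i, ∑ j, w i * w j * ((g i ^ 2 - g j ^ 2) * (h j - h i)) :=
    Finset.sum_nonneg fun i _ => Finset.sum_nonneg fun j _ =>
      mul_nonneg (mul_nonneg (hw i) (hw j)) (hmono i j)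
  have expand : ∑ i, ∑ j, w i * w j * ((g i ^ 2 - g j ^ 2) * (h j - h i)) =
      2 * ((∑ i, g i ^ 2 * w i) * (∑ j, w j * h j) -
        (∑ i, g i ^ 2 * w i * h i) * (∑ j, w j)) := by
    have e1 : (∑ i, g i ^ 2 * w i) * (∑ j, w j * h j)
        = ∑ i, ∑ j, (g i ^ 2 * w i) * (w j * h j) := Finset.sum_mul_sum _ _ _ _
    have e2 : (∑ i, g i ^ 2 * w i * h i) * (∑ j, w j)
        = ∑ i, ∑ j, (g i ^ 2 * w i * h i) * w j := Finset.sum_mul_sum _ _ _ _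
    have e3 : (∑ i, g i ^ 2 * w i) * (∑ j, w j * h j)
        = ∑ i, ∑ j, (g j ^ 2 * w j) * (w i * h i) := by
      rw [Finset.sum_mul_sum]; exact Finset.sum_comm
    have e4 : (∑ i, g i ^ 2 * w i * h i) * (∑ j, w j)
        = ∑ i, ∑ j, (g j ^ 2 * w j * h j) * w i := by
      rw [Finset.sum_mul_sum]; exact Finset.sum_comm
    calc ∑ i, ∑ j, w i * w j * ((g i ^ 2 - g j ^ 2) * (h j - h i))
        = ∑ i, ∑ j, ((g i ^ 2 * w i) * (w j * h j) + (g j ^ 2 * w j) * (w i * h i)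
            - (g i ^ 2 * w i * h i) * w j - (g j ^ 2 * w j * h j) * w i) := by
          refine Finset.sum_congr rfl fun i _ => Finset.sum_congr rfl fun j _ => ?_
          ring
      _ = 2 * ((∑ i, g i ^ 2 * w i) * (∑ j, w j * h j) -
          (∑ i, g i ^ 2 * w i * h i) * (∑ j, w j)) := by
          simp only [Finset.sum_add_distrib, Finset.sum_sub_distrib]
          rw [← e1, ← e2, ← e3, ← e4]; ring
  rw [expand] at hnn
  linarith

/-- The exponentially tilted second moment `s(λ)` is non-increasing in `λ ≥ 0`,
hence bounded by its value `s(0) = ∑ᵢ gᵢ² xᵢ`. -/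
theorem stmt10 (d : ℕ) (x : Fin d → ℝ) (hx0 : ∀ i, 0 ≤ x i) (hx1 : ∑ i, x i = 1)
    (g : Fin d → ℝ) (hg : ∀ i, 0 ≤ g i)
    (s : ℝ → ℝ)
    (hs : ∀ lam, s lam =
      (∑ i, g i ^ 2 * x i * Real.exp (-lam * g i)) /
        ∑ j, x j * Real.exp (-lam * g j)) :
    AntitoneOn s (Set.Ici 0) ∧ s 0 = ∑ i, g i ^ 2 * x i ∧
      ∀ lam : ℝ, 0 ≤ lam → s lam ≤ ∑ i, g i ^ 2 * x i := by
  have hxpos : ∃ j, 0 < x j := by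
    by_contra hc
    push_neg at hc
    have : ∑ i, x i = 0 := Finset.sum_eq_zero fun i _ => le_antisymm (hc i) (hx0 i)
    rw [hx1] at this; norm_num at this
  have hB : ∀ lam : ℝ, 0 < ∑ j, x j * Real.exp (-lam * g j) := by
    intro lam
    obtain ⟨j, hj⟩ := hxpos
    exact Finset.sum_pos' (fun i _ => mul_nonneg (hx0 i) (Real.exp_pos _).le)
      ⟨j, Finset.mem_univ j, mul_pos hj (Real.exp_pos _)⟩
  have hA : AntitoneOn s (Set.Ici 0) := by
    intro a ha b hb hab
    rw [hs a, hs b, div_le_div_iff₀ (hB b) (hB a)]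
    set w : Fin d → ℝ := fun i => x i * Real.exp (-a * g i) with hw
    set h : Fin d → ℝ := fun i => Real.exp (-(b - a) * g i) with hh
    have hexp : ∀ i, Real.exp (-b * g i) = w i / x i * h i ∨ True := fun _ => Or.inr trivial
    have hwnn : ∀ i, 0 ≤ w i := fun i => mul_nonneg (hx0 i) (Real.exp_pos _).le
    have hsplit : ∀ i, x i * Real.exp (-b * g i) = w i * h i := by
      intro i
      simp only [hw, hh, mul_assoc, ← Real.exp_add]
      ring_nf
    have hAb : ∑ i, g i ^ 2 * x i * Real.exp (-b * g i) = ∑ i, g i ^ 2 * w i * h i := by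
      refine Finset.sum_congr rfl fun i _ => ?_
      rw [mul_assoc, hsplit i]; simp only [hw]; ring
    have hBb : ∑ j, x j * Real.exp (-b * g j) = ∑ j, w j * h j :=
      Finset.sum_congr rfl fun j _ => hsplit j
    have hAa : ∑ i, g i ^ 2 * x i * Real.exp (-a * g i) = ∑ i, g i ^ 2 * w i := by
      refine Finset.sum_congr rfl fun i _ => ?_
      rw [hw, mul_assoc]
    rw [hAb, hBb, hAa]
    refine stmt10_key d w g h hwnn fun i j => ?_
    have hba : 0 ≤ b - a := by linarith
    rcases le_total (g i) (g j) with hij | hij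
    · have h1 : g i ^ 2 - g j ^ 2 ≤ 0 := by nlinarith [hg i, hg j]
      have h2 : h j - h i ≤ 0 := by
        simp only [hh, sub_nonpos]
        exact Real.exp_le_exp.2 (by nlinarith)
      nlinarith
    · have h1 : 0 ≤ g i ^ 2 - g j ^ 2 := by nlinarith [hg i, hg j]
      have h2 : 0 ≤ h j - h i := by
        simp only [hh, sub_nonneg]
        exact Real.exp_le_exp.2 (by nlinarith)
      nlinarith
  have hs0 : s 0 = ∑ i, g i ^ 2 * x i := by
    rw [hs 0]
    simp [hx1]
  refine ⟨hA, hs0, fun lam hl => ?_⟩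
  have := hA (Set.self_mem_Ici) hl hl
  rwa [hs0] at this
end

section
/- Let d ≥ 1, N ≥ 1, let w ∈ Δ_d have strictly positive entries, and let L ∈ [0,1]^d. Let J₁,…,J_N be i.i.d. samples from Categorical(w), and define γ_i = (1/N)(L_i/w_i) ∑_{k=1}^N 1{J_k = i} for i = 1,…,d. Then ∑_{i=1}^d w_i E[γ_i²] ≤ (d−1)/N + 1. Moreover, γ is an unbiased estimate: E[γ_i] = L_i for every i. -/
open Finset

lemma piSum16 {N d : ℕ} (F : Fin N → Fin d → ℝ) :
    ∑ J : Fin N → Fin d, ∏ k, F k (J k) = ∏ k, ∑ i, F k i := by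
  rw [Finset.prod_univ_sum]
  simp [Fintype.piFinset_univ]

lemma lemB16 {N d : ℕ} (w : Fin d → ℝ) (hw1 : ∑ i, w i = 1)
    (a : Fin d → ℝ) (k : Fin N) :
    ∑ J : Fin N → Fin d, (∏ m, w (J m)) * a (J k) = ∑ i, w i * a i := by
  have h1 : ∀ J : Fin N → Fin d,
      (∏ m, w (J m)) * a (J k) = ∏ m, (w (J m) * if m = k then a (J m) else 1) := by
    intro J
    rw [Finset.prod_mul_distrib]
    congr 1
    simp
  simp_rw [h1]
  rw [piSum16 (fun m i => w i * if m = k then a i else 1)]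
  have h2 : ∀ m : Fin N, (∑ i, w i * if m = k then a i else 1)
      = if m = k then (∑ i, w i * a i) else 1 := by
    intro m
    by_cases h : m = k <;> simp [h, hw1]
  simp_rw [h2]
  simp

lemma lemC16 {N d : ℕ} (w : Fin d → ℝ) (hw1 : ∑ i, w i = 1)
    (a b : Fin d → ℝ) (k k' : Fin N) (hkk : k ≠ k') :
    ∑ J : Fin N → Fin d, (∏ m, w (J m)) * (a (J k) * b (J k'))
      = (∑ i, w i * a i) * (∑ i, w i * b i) := by
  have h1 : ∀ J : Fin N → Fin d,
      (∏ m, w (J m)) * (a (J k) * b (J k'))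
        = ∏ m, (w (J m) * ((if m = k then a (J m) else 1) * (if m = k' then b (J m) else 1))) := by
    intro J
    rw [Finset.prod_mul_distrib]
    congr 1
    rw [Finset.prod_mul_distrib]
    congr 1 <;> simp
  simp_rw [h1]
  rw [piSum16 (fun m i => w i * ((if m = k then a i else 1) * (if m = k' then b i else 1)))]
  have h2 : ∀ m : Fin N, (∑ i, w i * ((if m = k then a i else 1) * (if m = k' then b i else 1)))
      = (if m = k then (∑ i, w i * a i) else 1) * (if m = k' then (∑ i, w i * b i) else 1) := by
    intro m
    by_cases h : m = k <;> by_cases h' : m = k' <;> simp_all [hw1, mul_comm]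
  simp_rw [h2]
  rw [Finset.prod_mul_distrib]
  simp

/-- The importance-weighted loss estimate `γ` used by EXP3 with `N` arm-pulls per
round is unbiased and satisfies `∑ᵢ wᵢ E[γᵢ²] ≤ (d-1)/N + 1`.  The expectation is
over the i.i.d. draws `J₁, …, J_N ∼ Categorical(w)`, modeled as the sum over all
sample vectors `J : Fin N → Fin d` weighted by `∏ₖ w (J k)`. -/
theorem stmt16 (d N : ℕ) (hd : 1 ≤ d) (hN : 1 ≤ N)
    (w : Fin d → ℝ) (hw0 : ∀ i, 0 < w i) (hw1 : ∑ i, w i = 1)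
    (L : Fin d → ℝ) (hL : ∀ i, L i ∈ Set.Icc (0 : ℝ) 1)
    (γ : (Fin N → Fin d) → Fin d → ℝ)
    (hγ : ∀ J i, γ J i =
      (1 / (N : ℝ)) * (L i / w i) * ∑ k, if J k = i then (1 : ℝ) else 0) :
    (∑ i, w i * ∑ J : Fin N → Fin d, (∏ k, w (J k)) * (γ J i) ^ 2 ≤
        ((d : ℝ) - 1) / N + 1) ∧
      ∀ i, ∑ J : Fin N → Fin d, (∏ k, w (J k)) * γ J i = L i := by
  have hNpos : (0 : ℝ) < N := by positivity
  have hNne : (N : ℝ) ≠ 0 := ne_of_gt hNpos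
  have hind : ∀ i : Fin d, (∑ i', w i' * (if i' = i then (1:ℝ) else 0)) = w i := by
    intro i; simp
  -- unbiasedness
  have unb : ∀ i, ∑ J : Fin N → Fin d, (∏ k, w (J k)) * γ J i = L i := by
    intro i
    have h1 : ∀ J : Fin N → Fin d,
        (∏ k, w (J k)) * γ J i
          = (1 / (N : ℝ)) * (L i / w i) *
            ∑ k, ((∏ m, w (J m)) * (if J k = i then (1:ℝ) else 0)) := by
      intro J
      rw [hγ, Finset.mul_sum, Finset.mul_sum, Finset.mul_sum]
      exact Finset.sum_congr rfl fun k _ => by ring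
    have h1' : ∑ J : Fin N → Fin d, (∏ k, w (J k)) * γ J i
        = (1 / (N : ℝ)) * (L i / w i) *
          ∑ J : Fin N → Fin d, ∑ k, ((∏ m, w (J m)) * (if J k = i then (1:ℝ) else 0)) := by
      rw [Finset.mul_sum]
      exact Finset.sum_congr rfl fun J _ => h1 J
    rw [h1', Finset.sum_comm]
    have h2 : ∀ k : Fin N,
        (∑ J : Fin N → Fin d, (∏ m, w (J m)) * (if J k = i then (1:ℝ) else 0)) = w i := by
      intro k
      rw [lemB16 w hw1 (fun j => if j = i then (1:ℝ) else 0) k, hind]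
    simp_rw [h2]
    rw [Finset.sum_const, Finset.card_univ]
    simp only [Fintype.card_fin, nsmul_eq_mul]
    field_simp [(hw0 i).ne']
  refine ⟨?_, unb⟩
  -- second moment of the indicator count
  have key : ∀ i : Fin d,
      (∑ J : Fin N → Fin d,
        (∏ k, w (J k)) * (∑ k, if J k = i then (1:ℝ) else 0) ^ 2)
      = (N : ℝ) * w i + ((N:ℝ)^2 - N) * (w i)^2 := by
    intro i
    have h1 : ∀ J : Fin N → Fin d,
        (∏ k, w (J k)) * (∑ k, if J k = i then (1:ℝ) else 0) ^ 2
          = ∑ k, ∑ k', (∏ m, w (J m)) *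
              ((if J k = i then (1:ℝ) else 0) * (if J k' = i then (1:ℝ) else 0)) := by
      intro J
      rw [pow_two, Finset.sum_mul_sum]
      rw [Finset.mul_sum]
      refine Finset.sum_congr rfl fun k _ => ?_
      rw [Finset.mul_sum]
    simp_rw [h1]
    rw [Finset.sum_comm]
    have h2 : ∀ k : Fin N,
        (∑ J : Fin N → Fin d, ∑ k', (∏ m, w (J m)) *
            ((if J k = i then (1:ℝ) else 0) * (if J k' = i then (1:ℝ) else 0)))
        = ∑ k' : Fin N, if k = k' then w i else w i * w i := by
      intro k
      rw [Finset.sum_comm]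
      refine Finset.sum_congr rfl fun k' _ => ?_
      by_cases hkk : k = k'
      · subst hkk
        have : ∀ J : Fin N → Fin d,
            (∏ m, w (J m)) * ((if J k = i then (1:ℝ) else 0) * (if J k = i then (1:ℝ) else 0))
            = (∏ m, w (J m)) * (if J k = i then (1:ℝ) else 0) := by
          intro J; by_cases h : J k = i <;> simp [h]
        simp_rw [this]
        rw [lemB16 w hw1 (fun j => if j = i then (1:ℝ) else 0) k, hind]
        simp
      · rw [if_neg hkk,
          lemC16 w hw1 (fun j => if j = i then (1:ℝ) else 0)
            (fun j => if j = i then (1:ℝ) else 0) k k' hkk, hind]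
    simp_rw [h2]
    have h3 : ∀ k : Fin N, (∑ k' : Fin N, if k = k' then w i else w i * w i)
        = w i * w i * N + (w i - w i * w i) := by
      intro k
      have he : ∀ k' : Fin N, (if k = k' then w i else w i * w i)
          = w i * w i + (if k = k' then w i - w i * w i else 0) := by
        intro k'; split <;> ring
      simp_rw [he, Finset.sum_add_distrib, Finset.sum_ite_eq, Finset.sum_const,
        Finset.card_univ]
      simp [nsmul_eq_mul]
      ring
    simp_rw [h3]
    rw [Finset.sum_const, Finset.card_univ]
    simp only [Fintype.card_fin, nsmul_eq_mul]
    ring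
  -- bound each term
  have hterm : ∀ i : Fin d,
      w i * ∑ J : Fin N → Fin d, (∏ k, w (J k)) * (γ J i) ^ 2
        ≤ (1 - w i) / N + w i := by
    intro i
    have h1 : ∀ J : Fin N → Fin d,
        (∏ k, w (J k)) * (γ J i) ^ 2
          = ((1 / (N : ℝ)) * (L i / w i))^2 *
            ((∏ k, w (J k)) * (∑ k, if J k = i then (1:ℝ) else 0) ^ 2) := by
      intro J
      rw [hγ, mul_pow]
      ring
    simp_rw [h1, ← Finset.mul_sum, key i]
    have hwne := (hw0 i).ne'
    have heq : w i * (((1 / (N : ℝ)) * (L i / w i))^2 *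
        ((N : ℝ) * w i + ((N:ℝ)^2 - N) * (w i)^2))
        = (L i)^2 * ((1 - w i) / N + w i) := by
      field_simp
      ring
    rw [heq]
    have hLi := hL i
    have hL2 : (L i)^2 ≤ 1 := by
      have h0 := hLi.1; have h1' := hLi.2; nlinarith
    have hfac : 0 ≤ (1 - w i) / N + w i := by
      have heq2 : (1 - w i) / N + w i = (1 + ((N:ℝ) - 1) * w i) / N := by
        field_simp; ring
      rw [heq2]
      have hN1 : (1:ℝ) ≤ (N:ℝ) := by exact_mod_cast hN
      have hnum : 0 ≤ 1 + ((N:ℝ) - 1) * w i := by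
        have := mul_nonneg (by linarith : (0:ℝ) ≤ (N:ℝ) - 1) (hw0 i).le
        linarith
      exact div_nonneg hnum hNpos.le
    have := mul_le_mul_of_nonneg_right hL2 hfac
    linarith
  calc ∑ i, w i * ∑ J : Fin N → Fin d, (∏ k, w (J k)) * (γ J i) ^ 2
      ≤ ∑ i, ((1 - w i) / N + w i) := Finset.sum_le_sum fun i _ => hterm i
    _ = ((d : ℝ) - 1) / N + 1 := by
        rw [Finset.sum_add_distrib, ← Finset.sum_div, Finset.sum_sub_distrib, hw1,
          Finset.sum_const, Finset.card_univ]
        simp [nsmul_eq_mul]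
end
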